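/- arXiv:2103.02414 — 13 statements merged into one kernel-verified Lean document; each statement's English description precedes it below -/
import Mathlib

section
/- Let N be a finite set with |N| ≥ 2 and let S be a nonempty family of subsets of N with ∅ ∉ S and N ∉ S. Suppose ∑_{S∈S} λ_S·χ_S = r·χ_N is a nonzero semi-conic combination (at most one coefficient strictly negative) yielding a constant vector. Then ∑_{S∈S} λ_S ≥ r ≥ 0. -/
open Finset

variable {α : Type*} [Fintype α] [DecidableEq α]

/-- Incidence (0/1 indicator) vector of a subset `S` of the player set. -/
def chi (S : Finset α) : α → ℝ := fun i => if i ∈ S then 1 else 0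

/-- A non-trivial set system on `N`: nonempty, not containing `∅` nor `N`. -/
def IsNontrivial (𝒮 : Finset (Finset α)) : Prop :=
  𝒮.Nonempty ∧ ∅ ∉ 𝒮 ∧ (Finset.univ : Finset α) ∉ 𝒮

/-- A combination is semi-conic if at most one coefficient is strictly negative. -/
def SemiConic (𝒮 : Finset (Finset α)) (lam : Finset α → ℝ) : Prop :=
  (𝒮.filter fun S => lam S < 0).card ≤ 1

/-- The combination `∑_{S ∈ 𝒮} lam S • χ_S` yields the constant vector `[r,…,r]`. -/
def CombYields (𝒮 : Finset (Finset α)) (lam : Finset α → ℝ) (r : ℝ) : Prop :=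
  ∀ i : α, ∑ S ∈ 𝒮, lam S * chi S i = r

/-- A semi-balanced set system on `N`. -/
def IsSemiBalanced (𝒮 : Finset (Finset α)) : Prop :=
  IsNontrivial 𝒮 ∧ ∃ (lam : Finset α → ℝ) (r : ℝ),
    CombYields 𝒮 lam r ∧ SemiConic 𝒮 lam ∧ ∀ S ∈ 𝒮, lam S ≠ 0

/-- A minimal semi-balanced set system on `N`. -/
def IsMinSemiBalanced (𝒮 : Finset (Finset α)) : Prop :=
  IsSemiBalanced 𝒮 ∧ ∀ 𝒞 ⊂ 𝒮, ¬ IsSemiBalanced 𝒞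

/-- A balanced set system on `N`. -/
def IsBalanced (ℬ : Finset (Finset α)) : Prop :=
  IsNontrivial ℬ ∧ ∃ lam : Finset α → ℝ,
    (∀ S ∈ ℬ, 0 < lam S) ∧ ∀ i : α, ∑ S ∈ ℬ, lam S * chi S i = 1

/-- A minimal balanced set system on `N`. -/
def IsMinBalanced (ℬ : Finset (Finset α)) : Prop :=
  IsBalanced ℬ ∧ ∀ 𝒞 ⊂ ℬ, ¬ IsBalanced 𝒞

/-- A set `T ∈ 𝒮` is exceptional within `𝒮`. -/
def IsExceptional (𝒮 : Finset (Finset α)) (T : Finset α) : Prop :=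
  T ∈ 𝒮 ∧ ∃ (lam : Finset α → ℝ) (r : ℝ),
    CombYields 𝒮 lam r ∧ lam T < 0 ∧ ∀ S ∈ 𝒮, S ≠ T → 0 ≤ lam S

theorem stmt1 (h2 : 2 ≤ Fintype.card α) (𝒮 : Finset (Finset α))
    (hnt : IsNontrivial 𝒮) (lam : Finset α → ℝ) (r : ℝ)
    (hcomb : CombYields 𝒮 lam r)
    (hsc : SemiConic 𝒮 lam)
    (hnz : ∃ S ∈ 𝒮, lam S ≠ 0) :
    r ≤ ∑ S ∈ 𝒮, lam S ∧ 0 ≤ r := by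
  -- helper: given i with all negative-coefficient sets containing i,
  -- and j with no negative-coefficient set containing j, both bounds follow
  have key : ∀ i j : α, (∀ S ∈ 𝒮, lam S < 0 → i ∈ S) → (∀ S ∈ 𝒮, lam S < 0 → j ∉ S) →
      r ≤ ∑ S ∈ 𝒮, lam S ∧ 0 ≤ r := by
    intro i j hi hj
    constructor
    · have h1 : ∑ S ∈ 𝒮, lam S - r = ∑ S ∈ 𝒮, lam S * (1 - chi S i) := by
        rw [← hcomb i, ← Finset.sum_sub_distrib]
        apply Finset.sum_congr rfl; intro S _; ring
      have h2 : 0 ≤ ∑ S ∈ 𝒮, lam S * (1 - chi S i) := by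
        apply Finset.sum_nonneg; intro S hS
        by_cases hneg : lam S < 0
        · have : i ∈ S := hi S hS hneg
          simp [chi, this]
        · apply mul_nonneg (le_of_not_gt hneg)
          simp only [chi]; split <;> norm_num
      linarith
    · rw [← hcomb j]
      apply Finset.sum_nonneg; intro S hS
      by_cases hneg : lam S < 0
      · have : j ∉ S := hj S hS hneg
        simp [chi, this]
      · apply mul_nonneg (le_of_not_gt hneg)
        simp only [chi]; split <;> norm_num
  by_cases hne : (𝒮.filter fun S => lam S < 0).Nonempty
  · obtain ⟨T, hT⟩ := hne
    rw [Finset.mem_filter] at hT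
    have huniq : ∀ S ∈ 𝒮, lam S < 0 → S = T := by
      intro S hS hSneg
      exact Finset.card_le_one.mp hsc S (Finset.mem_filter.mpr ⟨hS, hSneg⟩)
        T (Finset.mem_filter.mpr hT)
    have hTne : T ≠ ∅ := by rintro rfl; exact hnt.2.1 hT.1
    have hTnu : T ≠ Finset.univ := by rintro rfl; exact hnt.2.2 hT.1
    obtain ⟨i, hiT⟩ := Finset.nonempty_iff_ne_empty.mpr hTne
    obtain ⟨j, hjT⟩ : ∃ j, j ∉ T := by
      by_contra h; push_neg at h
      exact hTnu (Finset.eq_univ_of_forall h)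
    exact key i j (fun S hS hn => (huniq S hS hn) ▸ hiT)
      (fun S hS hn => (huniq S hS hn) ▸ hjT)
  · have : Nonempty α := Fintype.card_pos_iff.mp (by omega)
    obtain ⟨i⟩ := this
    have hall : ∀ S ∈ 𝒮, ¬ lam S < 0 := by
      intro S hS hn
      exact hne ⟨S, Finset.mem_filter.mpr ⟨hS, hn⟩⟩
    exact key i i (fun S hS hn => absurd hn (hall S hS))
      (fun S hS hn => absurd hn (hall S hS))
end

section
/- Let N be a finite set with |N| ≥ 2 and let S be a nonempty family of subsets of N with ∅ ∉ S and N ∉ S. Suppose ∑_{S∈S} λ_S·χ_S is a nonzero semi-conic combination yielding a constant vector in ℝ^N. Then ∑_{S∈S} λ_S > 0. -/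
open Finset

variable {α : Type*} [Fintype α] [DecidableEq α]

theorem stmt2 (h2 : 2 ≤ Fintype.card α) (𝒮 : Finset (Finset α))
    (hnt : IsNontrivial 𝒮) (lam : Finset α → ℝ) (r : ℝ)
    (hcomb : CombYields 𝒮 lam r)
    (hsc : SemiConic 𝒮 lam)
    (hnz : ∃ S ∈ 𝒮, lam S ≠ 0) :
    0 < ∑ S ∈ 𝒮, lam S := by
  obtain ⟨hne, hempty, huniv⟩ := hnt
  have chi_nonneg : ∀ (S : Finset α) (i : α), 0 ≤ chi S i := by
    intro S i; unfold chi; split <;> norm_num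
  have chi_le_one : ∀ (S : Finset α) (i : α), chi S i ≤ 1 := by
    intro S i; unfold chi; split <;> norm_num
  by_cases hT : ∃ T ∈ 𝒮, lam T < 0
  · obtain ⟨T, hTS, hTneg⟩ := hT
    have hpos : ∀ S ∈ 𝒮, S ≠ T → 0 ≤ lam S := by
      intro S hS hST
      by_contra h
      push_neg at h
      have hsub : ({S, T} : Finset (Finset α)) ⊆ 𝒮.filter fun X => lam X < 0 := by
        intro X hX
        simp only [Finset.mem_insert, Finset.mem_singleton] at hX
        rcases hX with rfl | rfl <;> simp [Finset.mem_filter, hS, hTS, h, hTneg]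
      have h2' : 2 ≤ (𝒮.filter fun X => lam X < 0).card := by
        have hc : ({S, T} : Finset (Finset α)).card = 2 := by
          rw [Finset.card_insert_of_notMem (by simp [hST]), Finset.card_singleton]
        rw [← hc]
        exact Finset.card_le_card hsub
      exact absurd (le_trans h2' hsc) (by norm_num)
    obtain ⟨j, hj⟩ : T.Nonempty :=
      Finset.nonempty_iff_ne_empty.mpr (by rintro rfl; exact hempty hTS)
    obtain ⟨i, hi⟩ : ∃ i, i ∉ T := by
      by_contra h; push_neg at h
      exact huniv (by rwa [(Finset.eq_univ_iff_forall).mpr h] at hTS)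
    have hterm_nonneg : ∀ x : α, x ∉ T → ∀ S ∈ 𝒮, 0 ≤ lam S * chi S x := by
      intro x hx S hS
      rcases eq_or_ne S T with rfl | hST
      · simp [chi, hx]
      · exact mul_nonneg (hpos S hS hST) (chi_nonneg S x)
    have hr0 : 0 ≤ r := by
      rw [← hcomb i]
      exact Finset.sum_nonneg (hterm_nonneg i hi)
    have hLr : r ≤ ∑ S ∈ 𝒮, lam S := by
      rw [← hcomb j]
      apply Finset.sum_le_sum
      intro S hS
      rcases eq_or_ne S T with rfl | hST
      · simp [chi, hj]
      · calc lam S * chi S j ≤ lam S * 1 :=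
              mul_le_mul_of_nonneg_left (chi_le_one S j) (hpos S hS hST)
          _ = lam S := mul_one _
    by_contra hL
    push_neg at hL
    have hr : r = 0 := le_antisymm (hLr.trans hL) hr0
    have hL0 : ∑ S ∈ 𝒮, lam S = 0 := le_antisymm hL (hr0.trans hLr)
    have key : ∀ S : Finset α, ∑ x ∈ T, chi S x = ((T ∩ S).card : ℝ) := by
      intro S
      unfold chi
      rw [Finset.sum_boole, Finset.filter_mem_eq_inter]
    have hswap : ∑ S ∈ 𝒮, lam S * ((T ∩ S).card : ℝ) = 0 := by
      have h1 : ∑ x ∈ T, ∑ S ∈ 𝒮, lam S * chi S x = 0 :=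
        Finset.sum_eq_zero fun x _ => by rw [hcomb x, hr]
      rw [Finset.sum_comm] at h1
      calc ∑ S ∈ 𝒮, lam S * ((T ∩ S).card : ℝ)
          = ∑ S ∈ 𝒮, ∑ x ∈ T, lam S * chi S x := by
            apply Finset.sum_congr rfl
            intro S _
            rw [← Finset.mul_sum, key]
        _ = 0 := h1
    have hE : ∑ S ∈ 𝒮, lam S * ((T.card : ℝ) - ((T ∩ S).card : ℝ)) = 0 := by
      simp only [mul_sub]
      rw [Finset.sum_sub_distrib, hswap, sub_zero, ← Finset.sum_mul, hL0, zero_mul]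
    have hEnn : ∀ S ∈ 𝒮, 0 ≤ lam S * ((T.card : ℝ) - ((T ∩ S).card : ℝ)) := by
      intro S hS
      rcases eq_or_ne S T with rfl | hST
      · simp [Finset.inter_self]
      · apply mul_nonneg (hpos S hS hST)
        have hle : (T ∩ S).card ≤ T.card := Finset.card_le_card Finset.inter_subset_left
        have : ((T ∩ S).card : ℝ) ≤ (T.card : ℝ) := by exact_mod_cast hle
        linarith
    have hzero : ∀ S ∈ 𝒮, S ≠ T → lam S = 0 := by
      intro S hS hST
      by_contra hne0
      have hSpos : 0 < lam S := lt_of_le_of_ne (hpos S hS hST) (Ne.symm hne0)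
      have hterm := (Finset.sum_eq_zero_iff_of_nonneg hEnn).mp hE S hS
      have hcard : ((T ∩ S).card : ℝ) = (T.card : ℝ) := by
        rcases mul_eq_zero.mp hterm with h | h
        · exact absurd h hne0
        · linarith
      have hcard' : (T ∩ S).card = T.card := by exact_mod_cast hcard
      have hTsub : T ⊆ S := by
        have heq : T ∩ S = T :=
          Finset.eq_of_subset_of_card_le Finset.inter_subset_left (le_of_eq hcard'.symm)
        exact Finset.inter_eq_left.mp heq
      have hss : T ⊂ S := hTsub.ssubset_of_ne (Ne.symm hST)
      obtain ⟨x, hxS, hxT⟩ := Finset.exists_of_ssubset hss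
      have hsum0 : ∑ S' ∈ 𝒮, lam S' * chi S' x = 0 := by rw [hcomb x, hr]
      have := (Finset.sum_eq_zero_iff_of_nonneg (hterm_nonneg x hxT)).mp hsum0 S hS
      rw [show chi S x = 1 from by simp [chi, hxS], mul_one] at this
      exact hne0 this
    have hfin : ∑ S ∈ 𝒮, lam S * chi S j = lam T := by
      rw [Finset.sum_eq_single T]
      · simp [chi, hj]
      · intro S hS hST; rw [hzero S hS hST, zero_mul]
      · intro h; exact absurd hTS h
    rw [hcomb j, hr] at hfin
    linarith
  · push_neg at hT
    obtain ⟨S₀, hS₀, hS₀ne⟩ := hnz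
    have hS₀pos : 0 < lam S₀ := lt_of_le_of_ne (hT S₀ hS₀) (Ne.symm hS₀ne)
    obtain ⟨i, hi⟩ : S₀.Nonempty :=
      Finset.nonempty_iff_ne_empty.mpr (by rintro rfl; exact hempty hS₀)
    have hnn : ∀ S ∈ 𝒮, 0 ≤ lam S * chi S i :=
      fun S hS => mul_nonneg (hT S hS) (chi_nonneg S i)
    have hle : lam S₀ * chi S₀ i ≤ ∑ S ∈ 𝒮, lam S * chi S i :=
      Finset.single_le_sum hnn hS₀
    rw [show chi S₀ i = 1 from by simp [chi, hi], mul_one, hcomb i] at hle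
    have hLr : r ≤ ∑ S ∈ 𝒮, lam S := by
      rw [← hcomb i]
      apply Finset.sum_le_sum
      intro S hS
      calc lam S * chi S i ≤ lam S * 1 :=
            mul_le_mul_of_nonneg_left (chi_le_one S i) (hT S hS)
        _ = lam S := mul_one _
    linarith
end

section
/- Let N be a finite set with |N| ≥ 2 and let S be a family of subsets of N with ∅ ∉ S and N ∉ S. Suppose ∑_{S∈S} λ_S·χ_S is a semi-conic combination with exactly one strictly negative coefficient (so it is not conic) yielding a constant vector in ℝ^N, and all coefficients nonzero. Then |S| ≥ 3 and consequently |N| ≥ 3. -/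
open Finset

variable {α : Type*} [Fintype α] [DecidableEq α]

omit [Fintype α] in
lemma chi_nonneg (S : Finset α) (i : α) : 0 ≤ chi S i := by
  simp only [chi]; split <;> norm_num

lemma exists_not_mem_of_ne_univ {s : Finset α} (h : s ≠ Finset.univ) :
    ∃ j, j ∉ s := by
  by_contra hc
  push_neg at hc
  exact h (Finset.eq_univ_iff_forall.mpr hc)

lemma two_aux {a b : Finset α} (hab : a ≠ b) (hbne : b.Nonempty) (hane : a.Nonempty)
    {la lb r : ℝ} (hla : la < 0) (hlb : 0 < lb)
    (hau : a ≠ Finset.univ) (hbu : b ≠ Finset.univ)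
    (h : ∀ i : α, la * chi a i + lb * chi b i = r) : False := by
  obtain ⟨ja, hja⟩ := exists_not_mem_of_ne_univ hau
  obtain ⟨jb, hjb⟩ := exists_not_mem_of_ne_univ hbu
  have hr0 : r = 0 := by
    have h1 := h ja
    have h2 := h jb
    simp only [chi, if_neg hja, if_neg hjb, mul_zero] at h1 h2
    have n1 : 0 ≤ lb * chi b ja := mul_nonneg hlb.le (chi_nonneg _ _)
    have n2 : la * chi a jb ≤ 0 := mul_nonpos_of_nonpos_of_nonneg hla.le (chi_nonneg _ _)
    simp only [chi] at n1 n2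
    linarith
  subst hr0
  have hba : b ⊆ a := by
    intro i hi
    by_contra hia
    have := h i
    simp [chi, hi, hia] at this
    linarith
  have hlab : la = -lb := by
    obtain ⟨i, hi⟩ := hbne
    have hia := hba hi
    have := h i
    simp [chi, hi, hia] at this
    linarith
  have hsub : a ⊆ b := by
    intro i hi
    by_contra hib
    have := h i
    simp [chi, hi, hib] at this
    linarith
  exact hab (Finset.Subset.antisymm hsub hba)

theorem stmt3 (h2 : 2 ≤ Fintype.card α) (𝒮 : Finset (Finset α))
    (hne : ∅ ∉ 𝒮) (hN : (Finset.univ : Finset α) ∉ 𝒮)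
    (lam : Finset α → ℝ) (r : ℝ) (hcomb : CombYields 𝒮 lam r)
    (hneg : (𝒮.filter fun S => lam S < 0).card = 1)
    (hnz : ∀ S ∈ 𝒮, lam S ≠ 0) :
    3 ≤ 𝒮.card ∧ 3 ≤ Fintype.card α := by
  have key : ∀ S ∈ 𝒮, S.Nonempty ∧ S ≠ Finset.univ := fun S hS =>
    ⟨Finset.nonempty_iff_ne_empty.mpr (fun h => hne (h ▸ hS)), fun h => hN (h ▸ hS)⟩
  have h1 : 1 ≤ 𝒮.card := hneg ▸ Finset.card_filter_le 𝒮 _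
  have hcard3 : 3 ≤ 𝒮.card := by
    by_contra hlt
    push_neg at hlt
    have : 𝒮.card = 1 ∨ 𝒮.card = 2 := by omega
    obtain ⟨T, hTfilt⟩ := Finset.card_eq_one.mp hneg
    have hTmem : T ∈ 𝒮 ∧ lam T < 0 := by
      have : T ∈ 𝒮.filter fun S => lam S < 0 := hTfilt ▸ Finset.mem_singleton_self T
      exact Finset.mem_filter.mp this
    rcases this with h | h
    · -- card 1 : 𝒮 = {T}
      obtain ⟨U, hU⟩ := Finset.card_eq_one.mp h
      have hUT : U = T := by
        have := hTmem.1
        rw [hU, Finset.mem_singleton] at this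
        exact this.symm
      subst hUT
      obtain ⟨⟨i, hi⟩, hTu⟩ := key U (hU ▸ Finset.mem_singleton_self U)
      obtain ⟨j, hj⟩ := exists_not_mem_of_ne_univ hTu
      have e1 := hcomb i
      have e2 := hcomb j
      rw [hU, Finset.sum_singleton] at e1 e2
      simp [chi, hi, hj] at e1 e2
      exact hnz U (hU ▸ Finset.mem_singleton_self U) (by linarith)
    · -- card 2
      obtain ⟨a, b, hab, hS⟩ := Finset.card_eq_two.mp h
      -- T is one of a, b; the other has positive coefficient
      have hmem := hTmem.1
      rw [hS, Finset.mem_insert, Finset.mem_singleton] at hmem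
      have hpos : ∀ S ∈ 𝒮, S ≠ T → 0 < lam S := by
        intro S hSmem hST
        have hnf : S ∉ 𝒮.filter fun S => lam S < 0 := by
          rw [hTfilt, Finset.mem_singleton]; exact hST
        rw [Finset.mem_filter] at hnf
        push_neg at hnf
        exact lt_of_le_of_ne (hnf hSmem) (Ne.symm (hnz S hSmem))
      have ha : a ∈ 𝒮 := hS ▸ Finset.mem_insert_self a _
      have hb : b ∈ 𝒮 := hS ▸ Finset.mem_insert_of_mem (Finset.mem_singleton_self b)
      have hcomb2 : ∀ i : α, lam a * chi a i + lam b * chi b i = r := by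
        intro i
        have := hcomb i
        rw [hS, Finset.sum_pair hab] at this
        exact this
      obtain ⟨hane, hau⟩ := key a ha
      obtain ⟨hbne, hbu⟩ := key b hb
      rcases hmem with hTa | hTb
      · -- T = a, so lam a < 0, lam b > 0
        have hla : lam a < 0 := hTa ▸ hTmem.2
        have hlb : 0 < lam b := hpos b hb (fun hbT => hab (hTa.symm ▸ hbT ▸ rfl))
        exact two_aux hab hbne hane hla hlb hau hbu hcomb2
      · have hlb : lam b < 0 := hTb ▸ hTmem.2
        have hla : 0 < lam a := hpos a ha (fun haT => hab (haT.trans hTb))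
        exact two_aux hab.symm hane hbne hlb hla hbu hau
          (fun i => by rw [add_comm]; exact hcomb2 i)
  refine ⟨hcard3, ?_⟩
  have hbig : 𝒮.card + 2 ≤ 2 ^ Fintype.card α := by
    have huniv_ne : (Finset.univ : Finset α) ≠ ∅ := by
      have hpos : 0 < Fintype.card α := by omega
      have : Nonempty α := Fintype.card_pos_iff.mp hpos
      exact Finset.univ_nonempty.ne_empty
    have hcardins : (insert ∅ (insert Finset.univ 𝒮)).card = 𝒮.card + 2 := by
      rw [Finset.card_insert_of_notMem, Finset.card_insert_of_notMem hN]
      simp only [Finset.mem_insert]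
      push_neg
      exact ⟨huniv_ne.symm, hne⟩
    calc 𝒮.card + 2 = (insert ∅ (insert Finset.univ 𝒮)).card := hcardins.symm
      _ ≤ Fintype.card (Finset α) := Finset.card_le_univ _
      _ = 2 ^ Fintype.card α := Fintype.card_finset
  by_contra hn
  push_neg at hn
  have : 2 ^ Fintype.card α ≤ 2 ^ 2 := Nat.pow_le_pow_right (by norm_num) (by omega)
  omega
end

section
/- Let N be a finite set with |N| ≥ 2. A nontrivial set system S on N is min-semi-balanced if and only if S is semi-balanced on N, the incidence vectors {χ_S : S ∈ S} are affinely independent, and moreover in the case ⋃S = N they are linearly independent. -/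
open Finset

variable {α : Type*} [Fintype α] [DecidableEq α]

/-- Affine independence of the incidence vectors of the members of `𝒮`. -/
def AffIndep (𝒮 : Finset (Finset α)) : Prop :=
  ∀ c : Finset α → ℝ, (∑ S ∈ 𝒮, c S = 0) → (∀ i : α, ∑ S ∈ 𝒮, c S * chi S i = 0) →
    ∀ S ∈ 𝒮, c S = 0

/-- Linear independence of the incidence vectors of the members of `𝒮`. -/
def LinIndep (𝒮 : Finset (Finset α)) : Prop :=
  ∀ c : Finset α → ℝ, (∀ i : α, ∑ S ∈ 𝒮, c S * chi S i = 0) → ∀ S ∈ 𝒮, c S = 0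


/-!
Call `c : Finset α → ℝ` a constant combination if `∑_{S ∈ 𝒮} c S • χ_S` is a constant vector.
Both sides of the equivalence say that the constant combinations form a line.

If `𝒮` is min-semi-balanced with balancing vector `λ` and `c` is a constant combination not
proportional to `λ`, move from `λ` along `c` until the first coefficient vanishes: no coefficient
changes sign, so the support of the new combination is a proper semi-balanced subsystem. A
semi-balancing `λ` yielding `0` puts every set inside the one set `T` with `λ T < 0`, so `⋃ 𝒮 ≠ N`,
and if moreover `∑ λ = 0` then `𝒮 = {T}`, which is absurd. Hence affine (and, when `⋃ 𝒮 = N`,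
linear) dependencies, being multiples of `λ`, are trivial.

Conversely, if `⋃ 𝒮 = N` linear independence makes `c ↦ r` injective on constant combinations
yielding `r`; otherwise `r = 0` is forced and affine independence makes `c ↦ ∑ c` injective. Either
way the constant combinations form a line, and a semi-balanced proper subsystem would give one
vanishing at a set where the balancing vector of `𝒮` does not.
-/

theorem mul_sub_nonneg_of_abs_le {x y : ℝ} (h : |y| ≤ |x|) : 0 ≤ x * (x - y) := by
  have h1 : x * y ≤ |x| * |y| := by rw [← abs_mul]; exact le_abs_self _
  have h2 : |x| * |y| ≤ |x| * |x| := mul_le_mul_of_nonneg_left h (abs_nonneg x)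
  rw [mul_sub]
  linarith [abs_mul_abs_self x]

theorem eq_zero_of_sum_mul_eq_zero {ι : Type*} {s : Finset ι} {T : ι} {w f : ι → ℝ}
    (hw : ∀ S ∈ s, S ≠ T → 0 < w S) (hf : ∀ S ∈ s, 0 ≤ f S) (hfT : f T = 0)
    (hsum : ∑ S ∈ s, w S * f S = 0) {S : ι} (hS : S ∈ s) : f S = 0 := by
  have hterm := (sum_eq_zero_iff_of_nonneg fun S hS => ?_).mp hsum S hS
  · rcases eq_or_ne S T with rfl | hST
    · exact hfT
    · exact (mul_eq_zero.mp hterm).resolve_left (hw S hS hST).ne'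
  · rcases eq_or_ne S T with rfl | hST
    · simp [hfT]
    · exact mul_nonneg (hw S hS hST).le (hf S hS)

section

omit [Fintype α] [DecidableEq α]

variable {𝒞 𝒮 : Finset (Finset α)} {c d lam : Finset α → ℝ} {r s : ℝ}

theorem SemiConic.mono (hd : SemiConic 𝒮 d) (h : 𝒞 ⊆ 𝒮) (hneg : ∀ S ∈ 𝒞, c S < 0 → d S < 0) :
    SemiConic 𝒞 c := by
  refine le_trans (card_le_card fun S hS => ?_) hd
  rw [mem_filter] at hS ⊢
  exact ⟨h hS.1, hneg S hS.1 hS.2⟩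

theorem SemiConic.pos_of_ne (hsc : SemiConic 𝒮 c) (hnz : ∀ S ∈ 𝒮, c S ≠ 0) {T : Finset α}
    (hT : T ∈ 𝒮) (hcT : c T < 0) {S : Finset α} (hS : S ∈ 𝒮) (hST : S ≠ T) : 0 < c S := by
  refine (hnz S hS).lt_or_gt.resolve_left fun hcS => ?_
  have : 1 < (𝒮.filter fun S => c S < 0).card :=
    one_lt_card.mpr ⟨S, mem_filter.mpr ⟨hS, hcS⟩, T, mem_filter.mpr ⟨hT, hcT⟩, hST⟩
  exact this.not_ge hsc

variable [DecidableEq α]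

theorem CombYields.sub_mul (hc : CombYields 𝒮 c s) (hd : CombYields 𝒮 d r) (b : ℝ) :
    CombYields 𝒮 (fun S => c S - b * d S) (s - b * r) := by
  intro i
  simp only [_root_.sub_mul, sum_sub_distrib, mul_assoc, ← mul_sum, hc i, hd i]

theorem CombYields.of_eq_mul (hd : CombYields 𝒮 d r) {b : ℝ} (h : ∀ S ∈ 𝒮, c S = b * d S) :
    CombYields 𝒮 c (b * r) := by
  intro i
  rw [← hd i, mul_sum]
  exact sum_congr rfl fun S hS => by rw [h S hS, mul_assoc]

theorem CombYields.eq_zero_of_notMem_sup (hc : CombYields 𝒮 c r) {i : α} (hi : i ∉ 𝒮.sup id) :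
    r = 0 := by
  rw [← hc i]
  refine sum_eq_zero fun S hS => ?_
  have hiS : i ∉ S := fun h => hi (mem_sup.mpr ⟨S, hS, h⟩)
  simp [chi, hiS]

theorem CombYields.extend (h : 𝒞 ⊆ 𝒮) (hc : CombYields 𝒞 c r) :
    CombYields 𝒮 (fun S => if S ∈ 𝒞 then c S else 0) r := by
  intro i
  rw [← hc i, ← sum_subset h fun S _ hS => by simp [hS]]
  exact sum_congr rfl fun S hS => by simp [hS]

theorem CombYields.filter_ne_zero (hc : CombYields 𝒮 c r) :
    CombYields (𝒮.filter fun S => c S ≠ 0) c r := by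
  intro i
  rw [sum_filter_of_ne fun S _ h => left_ne_zero_of_mul h]
  exact hc i

variable [Fintype α]

theorem CombYields.sum_mul_card_eq_zero (hc : CombYields 𝒮 c 0) :
    ∑ S ∈ 𝒮, c S * S.card = 0 := by
  have hchi : ∀ S : Finset α, ∑ i, chi S i = S.card := fun S => by simp [chi]
  calc ∑ S ∈ 𝒮, c S * S.card = ∑ i, ∑ S ∈ 𝒮, c S * chi S i := by
        rw [sum_comm]
        exact sum_congr rfl fun S _ => by rw [← mul_sum, hchi]
    _ = 0 := sum_eq_zero fun i _ => hc i

theorem isSemiBalanced_filter_ne_zero (hempty : ∅ ∉ 𝒮) (huniv : univ ∉ 𝒮) (hc : CombYields 𝒮 c r)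
    (hsc : SemiConic 𝒮 c) (hne : ∃ S ∈ 𝒮, c S ≠ 0) :
    IsSemiBalanced (𝒮.filter fun S => c S ≠ 0) := by
  obtain ⟨S, hS, hcS⟩ := hne
  have hsub := filter_subset (fun S => c S ≠ 0) 𝒮
  exact ⟨⟨⟨S, mem_filter.mpr ⟨hS, hcS⟩⟩, fun h => hempty (hsub h), fun h => huniv (hsub h)⟩,
    c, r, hc.filter_ne_zero, hsc.mono hsub fun _ _ => id, fun _ hS => (mem_filter.mp hS).2⟩

theorem exists_forall_subset_of_combYields_zero (hnt : IsNontrivial 𝒮) (hc : CombYields 𝒮 c 0)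
    (hsc : SemiConic 𝒮 c) (hnz : ∀ S ∈ 𝒮, c S ≠ 0) :
    ∃ T ∈ 𝒮, c T < 0 ∧ (∀ S ∈ 𝒮, S ≠ T → 0 < c S) ∧ ∀ S ∈ 𝒮, S ⊆ T := by
  obtain ⟨T, hT, hcT⟩ : ∃ T ∈ 𝒮, c T < 0 := by
    by_contra! hpos
    refine (sum_pos (fun S hS => ?_) hnt.1).ne' hc.sum_mul_card_eq_zero
    have hS' : S.Nonempty := nonempty_iff_ne_empty.mpr fun h => hnt.2.1 (h ▸ hS)
    exact mul_pos ((hpos S hS).lt_of_ne' (hnz S hS)) (by exact_mod_cast hS'.card_pos)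
  have hpos : ∀ S ∈ 𝒮, S ≠ T → 0 < c S := fun S hS hST => hsc.pos_of_ne hnz hT hcT hS hST
  refine ⟨T, hT, hcT, hpos, fun S hS i hiS => ?_⟩
  by_contra hiT
  have h := eq_zero_of_sum_mul_eq_zero hpos (fun S _ => by unfold chi; positivity)
    (by simp [chi, hiT]) (hc i) hS
  simp [chi, hiS] at h

theorem sup_ne_univ_of_combYields_zero (hnt : IsNontrivial 𝒮) (hc : CombYields 𝒮 c 0)
    (hsc : SemiConic 𝒮 c) (hnz : ∀ S ∈ 𝒮, c S ≠ 0) : 𝒮.sup id ≠ univ := by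
  intro hun
  obtain ⟨T, hT, -, -, hsub⟩ := exists_forall_subset_of_combYields_zero hnt hc hsc hnz
  have hT_univ : T = univ := eq_univ_of_forall fun i => by
    obtain ⟨S, hS, hiS⟩ := mem_sup.mp (hun ▸ mem_univ i)
    exact hsub S hS hiS
  exact hnt.2.2 (hT_univ ▸ hT)

theorem sum_ne_zero_of_combYields_zero (hnt : IsNontrivial 𝒮) (hc : CombYields 𝒮 c 0)
    (hsc : SemiConic 𝒮 c) (hnz : ∀ S ∈ 𝒮, c S ≠ 0) : ∑ S ∈ 𝒮, c S ≠ 0 := by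
  intro hsum
  obtain ⟨T, hT, hcT, hpos, hsub⟩ := exists_forall_subset_of_combYields_zero hnt hc hsc hnz
  have hsup : ∀ S ∈ 𝒮, T ⊆ S := fun S hS i hiT => by
    by_contra hiS
    have h := eq_zero_of_sum_mul_eq_zero (f := fun S => 1 - chi S i) hpos
      (fun S _ => by unfold chi; split_ifs <;> norm_num) (by simp [chi, hiT])
      (by simp only [mul_sub, mul_one, sum_sub_distrib, hsum, hc i, sub_zero]) hS
    simp [chi, hiS] at h
  have h𝒮 : 𝒮 = {T} := eq_singleton_iff_unique_mem.mpr
    ⟨hT, fun S hS => (hsub S hS).antisymm (hsup S hS)⟩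
  rw [h𝒮, sum_singleton] at hsum
  exact hcT.ne hsum

theorem IsMinSemiBalanced.exists_eq_mul (hmin : IsMinSemiBalanced 𝒮) (hlam : CombYields 𝒮 lam r)
    (hsc : SemiConic 𝒮 lam) (hnz : ∀ S ∈ 𝒮, lam S ≠ 0) (hc : CombYields 𝒮 c s) {S₀ : Finset α}
    (hS₀ : S₀ ∈ 𝒮) (hcS₀ : c S₀ ≠ 0) : ∃ b, ∀ S ∈ 𝒮, lam S = b * c S := by
  obtain ⟨S₁, hS₁F, hS₁min⟩ := (𝒮.filter fun S => c S ≠ 0).exists_min_image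
    (fun S => |lam S / c S|) ⟨S₀, mem_filter.mpr ⟨hS₀, hcS₀⟩⟩
  obtain ⟨hS₁, hcS₁⟩ := mem_filter.mp hS₁F
  -- the largest step along `c` that changes the sign of no coefficient of `lam`
  set t := lam S₁ / c S₁
  have hstep : ∀ S ∈ 𝒮, |t * c S| ≤ |lam S| := fun S hS => by
    by_cases hcS : c S = 0
    · simp [hcS]
    · calc |t * c S| = |t| * |c S| := abs_mul _ _
        _ ≤ |lam S / c S| * |c S| :=
          mul_le_mul_of_nonneg_right (hS₁min S (mem_filter.mpr ⟨hS, hcS⟩)) (abs_nonneg _)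
        _ = |lam S| := by rw [abs_div, div_mul_cancel₀ _ (abs_ne_zero.mpr hcS)]
  refine ⟨t, fun S hS => by_contra fun hne => ?_⟩
  have hsc' : SemiConic 𝒮 fun S => lam S - t * c S :=
    hsc.mono subset_rfl fun S' hS' hneg => (hnz S' hS').lt_or_gt.resolve_right fun hpos =>
      (mul_neg_of_pos_of_neg hpos hneg).not_ge (mul_sub_nonneg_of_abs_le (hstep S' hS'))
  have hproper : (𝒮.filter fun S => lam S - t * c S ≠ 0) ⊂ 𝒮 := by
    refine (ssubset_iff_of_subset (filter_subset _ _)).mpr ⟨S₁, hS₁, ?_⟩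
    simp [t, div_mul_cancel₀ _ hcS₁]
  exact hmin.2 _ hproper (isSemiBalanced_filter_ne_zero hmin.1.1.2.1 hmin.1.1.2.2
    (hlam.sub_mul hc t) hsc' ⟨S, hS, sub_ne_zero.mpr hne⟩)

theorem AffIndep.exists_eq_mul (haff : AffIndep 𝒮) (hlin : 𝒮.sup id = univ → LinIndep 𝒮)
    (hc : CombYields 𝒮 c s) (hd : CombYields 𝒮 d r) {S₀ : Finset α} (hS₀ : S₀ ∈ 𝒮)
    (hdS₀ : d S₀ ≠ 0) : ∃ b, ∀ S ∈ 𝒮, c S = b * d S := by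
  by_cases hun : 𝒮.sup id = univ
  · have hr : r ≠ 0 := fun hr => hdS₀ (hlin hun d (hr ▸ hd) S₀ hS₀)
    refine ⟨s / r, fun S hS => sub_eq_zero.mp (hlin hun (fun S => c S - s / r * d S) ?_ S hS)⟩
    have h := hc.sub_mul hd (s / r)
    rwa [div_mul_cancel₀ _ hr, sub_self] at h
  · obtain ⟨i, hi⟩ : ∃ i, i ∉ 𝒮.sup id := by simpa [eq_univ_iff_forall] using hun
    obtain rfl := hc.eq_zero_of_notMem_sup hi
    obtain rfl := hd.eq_zero_of_notMem_sup hi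
    have hsum : ∑ S ∈ 𝒮, d S ≠ 0 := fun h => hdS₀ (haff d h hd S₀ hS₀)
    set b := (∑ S ∈ 𝒮, c S) / ∑ S ∈ 𝒮, d S
    refine ⟨b, fun S hS => sub_eq_zero.mp (haff (fun S => c S - b * d S) ?_ ?_ S hS)⟩
    · rw [sum_sub_distrib, ← mul_sum, div_mul_cancel₀ _ hsum, sub_self]
    · have h := hc.sub_mul hd b
      rwa [mul_zero, sub_zero] at h

end

theorem stmt4_general (𝒮 : Finset (Finset α)) :
    IsMinSemiBalanced 𝒮 ↔
      (IsSemiBalanced 𝒮 ∧ AffIndep 𝒮 ∧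
        (𝒮.sup id = (Finset.univ : Finset α) → LinIndep 𝒮)) := by
  constructor
  · intro hmin
    obtain ⟨hnt, lam, r, hlam, hsc, hnz⟩ := hmin.1
    have hlam0 : ∀ {c b}, CombYields 𝒮 c 0 → (∀ S ∈ 𝒮, lam S = b * c S) → CombYields 𝒮 lam 0 :=
      fun hc hb => by simpa using hc.of_eq_mul hb
    refine ⟨hmin.1, fun c hsum hc S hS => by_contra fun hcS => ?_,
      fun hun c hc S hS => by_contra fun hcS => ?_⟩
    · obtain ⟨b, hb⟩ := hmin.exists_eq_mul hlam hsc hnz hc hS hcS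
      refine sum_ne_zero_of_combYields_zero hnt (hlam0 hc hb) hsc hnz ?_
      rw [sum_congr rfl hb, ← mul_sum, hsum, mul_zero]
    · obtain ⟨b, hb⟩ := hmin.exists_eq_mul hlam hsc hnz hc hS hcS
      exact sup_ne_univ_of_combYields_zero hnt (hlam0 hc hb) hsc hnz hun
  · rintro ⟨hsb, haff, hlin⟩
    refine ⟨hsb, fun 𝒞 h𝒞 h𝒞sb => ?_⟩
    obtain ⟨⟨⟨S₂, hS₂⟩, -⟩, mu, r', hmu, -, hmunz⟩ := h𝒞sb
    obtain ⟨-, lam, r, hlam, -, hnz⟩ := hsb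
    obtain ⟨S₁, hS₁, hS₁𝒞⟩ := exists_of_ssubset h𝒞
    obtain ⟨b, hb⟩ := haff.exists_eq_mul hlin (hmu.extend h𝒞.subset) hlam hS₁ (hnz S₁ hS₁)
    have hb0 : b = 0 := by simpa [hS₁𝒞, hnz S₁ hS₁] using hb S₁ hS₁
    exact hmunz S₂ hS₂ (by simpa [hS₂, hb0] using hb S₂ (h𝒞.subset hS₂))

theorem stmt4 (h2 : 2 ≤ Fintype.card α) (𝒮 : Finset (Finset α))
    (hnt : IsNontrivial 𝒮) :
    IsMinSemiBalanced 𝒮 ↔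
      (IsSemiBalanced 𝒮 ∧ AffIndep 𝒮 ∧
        (𝒮.sup id = (Finset.univ : Finset α) → LinIndep 𝒮)) :=
  stmt4_general 𝒮
end

section
/- Let N be a finite set with |N| ≥ 2. A nontrivial set system S on N is min-semi-balanced if and only if there is exactly one affine combination of the incidence vectors {χ_S : S ∈ S} yielding a constant vector in ℝ^N, and this unique combination is semi-conic with all coefficients nonzero. -/
open Finset

variable {α : Type*} [Fintype α] [DecidableEq α]

lemma yield_eval (𝒜 : Finset (Finset α)) (lam : Finset α → ℝ) (i : α) :
    ∑ S ∈ 𝒜, lam S * chi S i = ∑ S ∈ 𝒜.filter (fun S => i ∈ S), lam S := by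
  rw [Finset.sum_filter]
  refine Finset.sum_congr rfl fun S _ => ?_
  simp [chi, mul_ite]

lemma sum_pos_of_semibal (𝒮 : Finset (Finset α)) (hnt : IsNontrivial 𝒮)
    (lam : Finset α → ℝ) (r : ℝ) (hc : CombYields 𝒮 lam r)
    (hsc : SemiConic 𝒮 lam) (hnz : ∀ S ∈ 𝒮, lam S ≠ 0) :
    0 < ∑ S ∈ 𝒮, lam S := by
  obtain ⟨hne, hes, hus⟩ := hnt
  rcases Finset.eq_empty_or_nonempty (𝒮.filter fun S => lam S < 0) with hN | hN
  · -- all coefficients positive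
    have hpos : ∀ S ∈ 𝒮, 0 < lam S := by
      intro S hS
      rcases lt_or_gt_of_ne (hnz S hS) with h | h
      · have : S ∈ 𝒮.filter fun S => lam S < 0 := Finset.mem_filter.mpr ⟨hS, h⟩
        rw [hN] at this
        simp at this
      · exact h
    exact Finset.sum_pos hpos hne
  · obtain ⟨T, hT⟩ := hN
    have hTS : T ∈ 𝒮 := (Finset.mem_filter.mp hT).1
    have hTneg : lam T < 0 := (Finset.mem_filter.mp hT).2
    have hpos : ∀ S ∈ 𝒮, S ≠ T → 0 < lam S := by
      intro S hS hST
      rcases lt_or_gt_of_ne (hnz S hS) with h | h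
      · exfalso
        have h1 : ({S, T} : Finset (Finset α)) ⊆ 𝒮.filter fun S => lam S < 0 := by
          intro X hX
          simp only [Finset.mem_insert, Finset.mem_singleton] at hX
          rcases hX with rfl | rfl
          · exact Finset.mem_filter.mpr ⟨hS, h⟩
          · exact hT
        have h2 : ({S, T} : Finset (Finset α)).card = 2 := Finset.card_pair hST
        have h3 := Finset.card_le_card h1
        have h4 : (𝒮.filter fun S => lam S < 0).card ≤ 1 := hsc
        omega
      · exact h
    -- get i ∈ T and j ∉ T
    obtain ⟨i, hiT⟩ : T.Nonempty := Finset.nonempty_iff_ne_empty.mpr (by rintro rfl; exact hes hTS)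
    obtain ⟨j, hjT⟩ : ∃ j, j ∉ T := by
      by_contra h
      push_neg at h
      exact hus (by rwa [Finset.eq_univ_iff_forall.mpr h] at hTS)
    by_contra hσ
    push_neg at hσ
    -- r ≥ 0
    have hrj : r = ∑ S ∈ 𝒮.filter (fun S => j ∈ S), lam S := by
      rw [← hc j, yield_eval]
    have hr0 : 0 ≤ r := by
      rw [hrj]
      refine Finset.sum_nonneg fun S hS => ?_
      have ⟨hS1, hS2⟩ := Finset.mem_filter.mp hS
      exact le_of_lt (hpos S hS1 (by rintro rfl; exact hjT hS2))
    -- key : for every i ∈ T, every S ≠ T contains i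
    have key : ∀ i ∈ T, ∀ S ∈ 𝒮, S ≠ T → i ∈ S := by
      intro i hiT S₀ hS₀ hS₀T
      set A := 𝒮.filter (fun S => i ∈ S) with hA
      have hTA : T ∈ A := Finset.mem_filter.mpr ⟨hTS, hiT⟩
      have hri : r = lam T + ∑ S ∈ A.erase T, lam S := by
        rw [← hc i, yield_eval, ← Finset.add_sum_erase _ _ hTA]
      have hsub : A.erase T ⊆ 𝒮.erase T := by
        intro X hX
        have := Finset.mem_erase.mp hX
        exact Finset.mem_erase.mpr ⟨this.1, (Finset.mem_filter.mp this.2).1⟩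
      have hle : ∑ S ∈ A.erase T, lam S ≤ ∑ S ∈ 𝒮.erase T, lam S := by
        refine Finset.sum_le_sum_of_subset_of_nonneg hsub fun X hX _ => ?_
        have := Finset.mem_erase.mp hX
        exact le_of_lt (hpos X this.2 this.1)
      have hσ' : lam T + ∑ S ∈ 𝒮.erase T, lam S ≤ 0 := by
        rwa [Finset.add_sum_erase _ _ hTS]
      have hrle : r ≤ 0 := by rw [hri]; linarith
      have hreq : r = 0 := le_antisymm hrle hr0
      -- equality throughout
      have heq : ∑ S ∈ A.erase T, lam S = ∑ S ∈ 𝒮.erase T, lam S := by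
        rw [hreq] at hri
        linarith
      -- sdiff sum zero
      have hsd : ∑ S ∈ (𝒮.erase T) \ (A.erase T), lam S = 0 := by
        have := Finset.sum_sdiff (f := lam) hsub
        linarith
      by_contra hiS
      have hmem : S₀ ∈ (𝒮.erase T) \ (A.erase T) := by
        refine Finset.mem_sdiff.mpr ⟨Finset.mem_erase.mpr ⟨hS₀T, hS₀⟩, ?_⟩
        intro hX
        exact hiS (Finset.mem_filter.mp (Finset.mem_erase.mp hX).2).2
      have hlt : 0 < ∑ S ∈ (𝒮.erase T) \ (A.erase T), lam S := by
        refine Finset.sum_pos' (fun X hX => ?_) ⟨S₀, hmem, ?_⟩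
        · have := Finset.mem_sdiff.mp hX
          exact le_of_lt (hpos X (Finset.mem_erase.mp this.1).2 (Finset.mem_erase.mp this.1).1)
        · exact hpos S₀ hS₀ hS₀T
      linarith
    -- also r ≤ 0 via i (needed to conclude r = 0 even outside key)
    have hrle : r ≤ 0 := by
      have hTA : T ∈ 𝒮.filter (fun S => i ∈ S) := Finset.mem_filter.mpr ⟨hTS, hiT⟩
      have hri : r = lam T + ∑ S ∈ (𝒮.filter (fun S => i ∈ S)).erase T, lam S := by
        rw [← hc i, yield_eval, ← Finset.add_sum_erase _ _ hTA]
      have hsub : (𝒮.filter (fun S => i ∈ S)).erase T ⊆ 𝒮.erase T := by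
        intro X hX
        have := Finset.mem_erase.mp hX
        exact Finset.mem_erase.mpr ⟨this.1, (Finset.mem_filter.mp this.2).1⟩
      have hle : ∑ S ∈ (𝒮.filter (fun S => i ∈ S)).erase T, lam S ≤ ∑ S ∈ 𝒮.erase T, lam S := by
        refine Finset.sum_le_sum_of_subset_of_nonneg hsub fun X hX _ => ?_
        have := Finset.mem_erase.mp hX
        exact le_of_lt (hpos X this.2 this.1)
      have hσ' : lam T + ∑ S ∈ 𝒮.erase T, lam S ≤ 0 := by
        rwa [Finset.add_sum_erase _ _ hTS]
      linarith
    have hreq : r = 0 := le_antisymm hrle hr0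
    -- every S ≠ T satisfies S ⊆ T
    have hsubT : ∀ S ∈ 𝒮, S ≠ T → S ⊆ T := by
      intro S hS hST k hkS
      by_contra hkT
      have hrk : r = ∑ X ∈ 𝒮.filter (fun X => k ∈ X), lam X := by
        rw [← hc k, yield_eval]
      have hmem : S ∈ 𝒮.filter (fun X => k ∈ X) := Finset.mem_filter.mpr ⟨hS, hkS⟩
      have hlt : 0 < ∑ X ∈ 𝒮.filter (fun X => k ∈ X), lam X := by
        refine Finset.sum_pos' (fun X hX => ?_) ⟨S, hmem, hpos S hS hST⟩
        have := Finset.mem_filter.mp hX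
        exact le_of_lt (hpos X this.1 (by rintro rfl; exact hkT this.2))
      rw [hreq] at hrk
      linarith
    -- every S ≠ T satisfies T ⊆ S, hence S = T, contradiction unless 𝒮 = {T}
    have hST : ∀ S ∈ 𝒮, S = T := by
      intro S hS
      by_contra hne'
      exact hne' (Finset.Subset.antisymm (hsubT S hS hne') (fun k hkT => key k hkT S hS hne'))
    have h𝒮 : 𝒮 = {T} := by
      apply Finset.Subset.antisymm
      · intro S hS; simp [hST S hS]
      · intro S hS; simp at hS; subst hS; exact hTS
    have h1 : r = lam T := by
      have := hc i
      rw [h𝒮] at this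
      simpa [chi, hiT] using this.symm
    rw [hreq] at h1
    exact hnz T hTS h1.symm

lemma crossing (𝒮 : Finset (Finset α)) (hnt : IsNontrivial 𝒮)
    (hmin : ∀ 𝒞 ⊂ 𝒮, ¬ IsSemiBalanced 𝒞)
    (lam : Finset α → ℝ) (r : ℝ) (hsum : ∑ S ∈ 𝒮, lam S = 1)
    (hc : CombYields 𝒮 lam r) (hsc : SemiConic 𝒮 lam) (hnz : ∀ S ∈ 𝒮, lam S ≠ 0)
    (e : Finset α → ℝ) (re : ℝ) (hesum : ∑ S ∈ 𝒮, e S = 0)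
    (hec : CombYields 𝒮 e re)
    (hP : ∀ T ∈ 𝒮, lam T < 0 → 0 ≤ e T) :
    ∀ S ∈ 𝒮, e S = 0 := by
  by_contra hcon
  push_neg at hcon
  obtain ⟨S₀, hS₀, hS₀ne⟩ := hcon
  set E := 𝒮.filter (fun S => lam S * e S < 0) with hE
  have hEne : E.Nonempty := by
    rw [Finset.nonempty_iff_ne_empty]
    intro hemp
    have hnn : ∀ S ∈ 𝒮, 0 ≤ e S := by
      intro S hS
      rcases lt_or_gt_of_ne (hnz S hS) with h | h
      · exact hP S hS h
      · by_contra heS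
        push_neg at heS
        have : S ∈ E := Finset.mem_filter.mpr ⟨hS, mul_neg_of_pos_of_neg h heS⟩
        rw [hemp] at this
        simp at this
    have := (Finset.sum_eq_zero_iff_of_nonneg hnn).mp hesum
    exact hS₀ne (this S₀ hS₀)
  obtain ⟨S₁, hS₁E, hS₁min⟩ := Finset.exists_min_image E (fun S => -lam S / e S) hEne
  have hS₁𝒮 : S₁ ∈ 𝒮 := (Finset.mem_filter.mp hS₁E).1
  have hS₁neg : lam S₁ * e S₁ < 0 := (Finset.mem_filter.mp hS₁E).2
  have heS₁ : e S₁ ≠ 0 := by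
    intro h; rw [h, mul_zero] at hS₁neg; linarith
  set t := -lam S₁ / e S₁ with ht
  have htpos : 0 < t := by
    rcases mul_neg_iff.mp hS₁neg with ⟨h1, h2⟩ | ⟨h1, h2⟩
    · exact div_pos_of_neg_of_neg (by linarith) h2
    · exact div_pos (by linarith) h2
  set lam₂ : Finset α → ℝ := fun S => lam S + t * e S with hlam₂
  have hz1 : lam₂ S₁ = 0 := by
    simp only [hlam₂, ht]
    rw [div_mul_cancel₀ _ heS₁]
    ring
  have hpos2 : ∀ S ∈ 𝒮, 0 < lam S → 0 ≤ lam₂ S := by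
    intro S hS hl
    rcases le_or_gt 0 (e S) with h | h
    · have : 0 ≤ t * e S := mul_nonneg (le_of_lt htpos) h
      simp only [hlam₂]; linarith
    · have hSE : S ∈ E := Finset.mem_filter.mpr ⟨hS, mul_neg_of_pos_of_neg hl h⟩
      have hmin' : t ≤ -lam S / e S := hS₁min S hSE
      have : (-lam S / e S) * e S ≤ t * e S :=
        mul_le_mul_of_nonpos_right hmin' (le_of_lt h)
      rw [div_mul_cancel₀ _ (ne_of_lt h)] at this
      simp only [hlam₂]; linarith
  have hneg2 : ∀ S ∈ 𝒮, lam S < 0 → lam₂ S ≤ 0 := by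
    intro S hS hl
    rcases eq_or_lt_of_le (hP S hS hl) with h | h
    · simp only [hlam₂, ← h]; linarith
    · have hSE : S ∈ E := Finset.mem_filter.mpr ⟨hS, mul_neg_of_neg_of_pos hl h⟩
      have hmin' : t ≤ -lam S / e S := hS₁min S hSE
      have : t * e S ≤ (-lam S / e S) * e S :=
        mul_le_mul_of_nonneg_right hmin' (le_of_lt h)
      rw [div_mul_cancel₀ _ (ne_of_gt h)] at this
      simp only [hlam₂]; linarith
  have hsc2 : (𝒮.filter fun S => lam₂ S < 0).card ≤ 1 := by
    refine le_trans (Finset.card_le_card ?_) hsc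
    intro S hS
    obtain ⟨hS𝒮, hSl⟩ := Finset.mem_filter.mp hS
    refine Finset.mem_filter.mpr ⟨hS𝒮, ?_⟩
    rcases lt_or_gt_of_ne (hnz S hS𝒮) with h | h
    · exact h
    · exact absurd hSl (not_lt.mpr (hpos2 S hS𝒮 h))
  have hsum2 : ∑ S ∈ 𝒮, lam₂ S = 1 := by
    simp only [hlam₂]
    rw [Finset.sum_add_distrib, ← Finset.mul_sum, hsum, hesum, mul_zero, add_zero]
  set 𝒞 := 𝒮.filter (fun S => lam₂ S ≠ 0) with h𝒞def
  have h𝒞sum : ∑ S ∈ 𝒞, lam₂ S = 1 := by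
    rw [h𝒞def, Finset.sum_filter_of_ne (fun x _ h => h), hsum2]
  have hss : 𝒞 ⊂ 𝒮 := by
    refine Finset.ssubset_iff_subset_ne.mpr ⟨Finset.filter_subset _ _, ?_⟩
    intro h
    have : S₁ ∈ 𝒞 := h ▸ hS₁𝒮
    exact (Finset.mem_filter.mp this).2 hz1
  refine hmin 𝒞 hss ⟨⟨?_, ?_, ?_⟩, lam₂, r + t * re, ?_, ?_, ?_⟩
  · rw [Finset.nonempty_iff_ne_empty]
    intro h
    rw [h, Finset.sum_empty] at h𝒞sum
    norm_num at h𝒞sum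
  · intro h; exact hnt.2.1 (hss.subset h)
  · intro h; exact hnt.2.2 (hss.subset h)
  · intro i
    rw [h𝒞def, Finset.sum_filter_of_ne (fun x _ h => left_ne_zero_of_mul h)]
    simp only [hlam₂]
    simp_rw [add_mul, mul_assoc]
    rw [Finset.sum_add_distrib, ← Finset.mul_sum, hc i, hec i]
  · exact le_trans (Finset.card_le_card
      (Finset.filter_subset_filter _ (Finset.filter_subset _ _))) hsc2
  · intro S hS
    exact (Finset.mem_filter.mp hS).2

lemma normalized_witness (𝒮 : Finset (Finset α)) (h : IsSemiBalanced 𝒮) :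
    ∃ (lam : Finset α → ℝ) (r : ℝ), (∑ S ∈ 𝒮, lam S = 1) ∧ CombYields 𝒮 lam r ∧
      SemiConic 𝒮 lam ∧ ∀ S ∈ 𝒮, lam S ≠ 0 := by
  obtain ⟨hnt, lam, r, hc, hsc, hnz⟩ := h
  have hσ := sum_pos_of_semibal 𝒮 hnt lam r hc hsc hnz
  set σ := ∑ S ∈ 𝒮, lam S with hσdef
  refine ⟨fun S => lam S / σ, r / σ, ?_, ?_, ?_, ?_⟩
  · rw [← Finset.sum_div, ← hσdef, div_self (ne_of_gt hσ)]
  · intro i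
    simp_rw [div_mul_eq_mul_div]
    rw [← Finset.sum_div, hc i]
  · show (𝒮.filter fun S => lam S / σ < 0).card ≤ 1
    have heq : (𝒮.filter fun S => lam S / σ < 0) = 𝒮.filter fun S => lam S < 0 := by
      refine Finset.filter_congr fun S _ => ?_
      constructor
      · intro h
        rcases div_neg_iff.mp h with ⟨h1, h2⟩ | ⟨h1, h2⟩ <;> linarith
      · intro h
        exact div_neg_of_neg_of_pos h hσ
    rw [heq]; exact hsc
  · intro S hS
    exact div_ne_zero (hnz S hS) (ne_of_gt hσ)


theorem stmt5 (h2 : 2 ≤ Fintype.card α) (𝒮 : Finset (Finset α))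
    (hnt : IsNontrivial 𝒮) :
    IsMinSemiBalanced 𝒮 ↔
      ∃ lam : Finset α → ℝ, (∑ S ∈ 𝒮, lam S = 1) ∧ (∃ r : ℝ, CombYields 𝒮 lam r) ∧
        SemiConic 𝒮 lam ∧ (∀ S ∈ 𝒮, lam S ≠ 0) ∧
        ∀ lam' : Finset α → ℝ, (∑ S ∈ 𝒮, lam' S = 1) → (∃ r : ℝ, CombYields 𝒮 lam' r) →
          ∀ S ∈ 𝒮, lam' S = lam S := by
  constructor
  · rintro ⟨hsb, hmin⟩
    obtain ⟨lam, r, hsum, hc, hsc, hnz⟩ := normalized_witness 𝒮 hsb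
    refine ⟨lam, hsum, ⟨r, hc⟩, hsc, hnz, ?_⟩
    intro lam' hsum' hr'
    obtain ⟨r', hc'⟩ := hr'
    set d : Finset α → ℝ := fun S => lam' S - lam S with hd
    have hdsum : ∑ S ∈ 𝒮, d S = 0 := by
      simp only [hd]
      rw [Finset.sum_sub_distrib, hsum', hsum, sub_self]
    have hdc : CombYields 𝒮 d (r' - r) := by
      intro i
      simp only [hd]
      simp_rw [sub_mul]
      rw [Finset.sum_sub_distrib, hc i, hc' i]
    by_cases hcase : ∃ T ∈ 𝒮, lam T < 0 ∧ d T < 0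
    · obtain ⟨T, hT𝒮, hTl, hTd⟩ := hcase
      have hedsum : ∑ S ∈ 𝒮, (-d) S = 0 := by
        simp only [Pi.neg_apply]
        rw [Finset.sum_neg_distrib, hdsum, neg_zero]
      have hedc : CombYields 𝒮 (-d) (r - r') := by
        intro i
        simp only [Pi.neg_apply]
        simp_rw [neg_mul]
        rw [Finset.sum_neg_distrib, hdc i]
        ring
      have hP : ∀ T' ∈ 𝒮, lam T' < 0 → 0 ≤ (-d) T' := by
        intro T' hT' hT'l
        have : T' = T := by
          have h1 : T ∈ 𝒮.filter fun S => lam S < 0 := Finset.mem_filter.mpr ⟨hT𝒮, hTl⟩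
          have h2 : T' ∈ 𝒮.filter fun S => lam S < 0 := Finset.mem_filter.mpr ⟨hT', hT'l⟩
          exact Finset.card_le_one.mp hsc _ h2 _ h1
        subst this
        simp only [Pi.neg_apply]
        linarith
      intro S hS
      have := crossing 𝒮 hnt hmin lam r hsum hc hsc hnz (-d) (r - r') hedsum hedc hP S hS
      simp only [Pi.neg_apply, neg_eq_zero, hd] at this
      linarith
    · push_neg at hcase
      have hP : ∀ T ∈ 𝒮, lam T < 0 → 0 ≤ d T := fun T hT hTl => hcase T hT hTl
      intro S hS
      have := crossing 𝒮 hnt hmin lam r hsum hc hsc hnz d (r' - r) hdsum hdc hP S hS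
      simp only [hd] at this
      linarith
  · rintro ⟨lam, hsum, ⟨r, hc⟩, hsc, hnz, huniq⟩
    refine ⟨⟨hnt, lam, r, hc, hsc, hnz⟩, ?_⟩
    rintro 𝒞 h𝒞 ⟨hnt𝒞, mu, s, hcm, hscm, hnzm⟩
    have hσ := sum_pos_of_semibal 𝒞 hnt𝒞 mu s hcm hscm hnzm
    set σ := ∑ S ∈ 𝒞, mu S with hσdef
    set mu' : Finset α → ℝ := fun S => if S ∈ 𝒞 then mu S / σ else 0 with hmu'
    have hzero : ∀ x ∈ 𝒮, x ∉ 𝒞 → mu' x = 0 := by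
      intro x _ hx𝒞
      simp [hmu', hx𝒞]
    have hsum' : ∑ S ∈ 𝒮, mu' S = 1 := by
      rw [← Finset.sum_subset h𝒞.subset hzero]
      have : ∀ S ∈ 𝒞, mu' S = mu S / σ := by
        intro S hS; simp [hmu', hS]
      rw [Finset.sum_congr rfl this, ← Finset.sum_div, ← hσdef, div_self (ne_of_gt hσ)]
    have hc' : CombYields 𝒮 mu' (s / σ) := by
      intro i
      rw [← Finset.sum_subset h𝒞.subset (fun x hx hx𝒞 => by rw [hzero x hx hx𝒞, zero_mul])]
      have : ∀ S ∈ 𝒞, mu' S * chi S i = mu S * chi S i / σ := by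
        intro S hS
        simp only [hmu', if_pos hS]
        ring
      rw [Finset.sum_congr rfl this, ← Finset.sum_div, hcm i]
    obtain ⟨S₁, hS₁𝒮, hS₁𝒞⟩ := Finset.exists_of_ssubset h𝒞
    have heq := huniq mu' hsum' ⟨s / σ, hc'⟩ S₁ hS₁𝒮
    rw [hmu'] at heq
    simp only [if_neg hS₁𝒞] at heq
    exact hnz S₁ hS₁𝒮 heq.symm
end

section
/- Let N be a finite set with |N| ≥ 2 and let B be a balanced set system on N. Then B is minimal within the class of balanced systems on N if and only if B is minimal within the class of semi-balanced systems on N. -/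
/-!
If the incidence vectors of a balanced system `ℬ` (weights `μ > 0`) admit a linear dependence `c`
with some `c S > 0`, then moving the weights to `μ - t c` for the largest admissible `t` keeps them
nonnegative, kills at least one of them, and leaves a balanced proper subsystem. So a minimal
balanced system has linearly independent incidence vectors. If a proper subsystem `𝒞 ⊂ ℬ` were
semi-balanced, `∑_{S ∈ 𝒞} λ_S χ_S = r · 1 = ∑_{S ∈ ℬ} r μ_S χ_S`; comparing coefficients at a set of
`ℬ \ 𝒞` gives `r = 0`, and then all `λ_S = 0`, which is excluded. Conversely, balanced systems are
semi-balanced.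
-/

open Finset

variable {α : Type*} [Fintype α] [DecidableEq α]

-- Rebinding `α` keeps the instance it does not need from the ambient `variable` out of a lemma.
theorem combYields_iff {α : Type*} [DecidableEq α] {𝒮 : Finset (Finset α)}
    {lam : Finset α → ℝ} {r : ℝ} :
    CombYields 𝒮 lam r ↔ ∑ S ∈ 𝒮, lam S • chi S = fun _ => r := by
  simp only [CombYields, funext_iff, Finset.sum_apply, Pi.smul_apply, smul_eq_mul]

theorem isBalanced_iff {ℬ : Finset (Finset α)} :
    IsBalanced ℬ ↔ IsNontrivial ℬ ∧
      ∃ lam : Finset α → ℝ, (∀ S ∈ ℬ, 0 < lam S) ∧ ∑ S ∈ ℬ, lam S • chi S = fun _ => 1 := by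
  simp only [IsBalanced, ← combYields_iff]
  rfl

theorem IsNontrivial.nonempty {α : Type*} [Fintype α] {𝒮 : Finset (Finset α)}
    (h : IsNontrivial 𝒮) : Nonempty α := by
  obtain ⟨S, hS⟩ := h.1
  obtain ⟨i, -⟩ := Finset.nonempty_iff_ne_empty.mpr (ne_of_mem_of_not_mem hS h.2.1)
  exact ⟨i⟩

theorem IsNontrivial.mono {α : Type*} [Fintype α] {𝒞 𝒮 : Finset (Finset α)}
    (h : IsNontrivial 𝒮) (h𝒞 : 𝒞 ⊆ 𝒮) (hne : 𝒞.Nonempty) : IsNontrivial 𝒞 :=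
  ⟨hne, fun hempty => h.2.1 (h𝒞 hempty), fun huniv => h.2.2 (h𝒞 huniv)⟩

theorem IsNontrivial.isBalanced_filter_pos {ℬ : Finset (Finset α)} (h : IsNontrivial ℬ)
    {lam : Finset α → ℝ} (hlam : ∀ S ∈ ℬ, 0 ≤ lam S)
    (hsum : ∑ S ∈ ℬ, lam S • chi S = fun _ => 1) :
    IsBalanced (ℬ.filter fun S => 0 < lam S) := by
  have hsum' : ∑ S ∈ ℬ.filter (fun S => 0 < lam S), lam S • chi S = fun _ => 1 := by
    rw [Finset.sum_filter_of_ne fun S hS hne => (hlam S hS).lt_of_ne' ?_, hsum]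
    intro hzero
    simp [hzero] at hne
  obtain ⟨i⟩ := h.nonempty
  have hne : (ℬ.filter fun S => 0 < lam S).Nonempty := by
    refine Finset.nonempty_of_sum_ne_zero (f := fun S => lam S • chi S) fun hzero => ?_
    simpa using congrFun (hsum'.symm.trans hzero) i
  exact isBalanced_iff.mpr ⟨h.mono (Finset.filter_subset _ _) hne, lam,
    fun S hS => (Finset.mem_filter.mp hS).2, hsum'⟩

theorem IsBalanced.isSemiBalanced {ℬ : Finset (Finset α)} (hb : IsBalanced ℬ) :
    IsSemiBalanced ℬ := by
  obtain ⟨hnt, lam, hpos, hsum⟩ := hb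
  refine ⟨hnt, lam, 1, hsum, ?_, fun S hS => (hpos S hS).ne'⟩
  simp [SemiConic, Finset.filter_eq_empty_iff.mpr fun S hS => (hpos S hS).not_gt]

theorem exists_sub_mul_nonneg_and_eq_zero {ι : Type*} {s : Finset ι} {μ c : ι → ℝ}
    (hμ : ∀ i ∈ s, 0 ≤ μ i) (hc : ∃ i ∈ s, 0 < c i) :
    ∃ t : ℝ, ∃ j ∈ s, (∀ i ∈ s, 0 ≤ μ i - t * c i) ∧ μ j - t * c j = 0 := by
  obtain ⟨i₀, hi₀, hci₀⟩ := hc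
  obtain ⟨j, hj, hmin⟩ := Finset.exists_min_image (s.filter fun i => 0 < c i)
    (fun i => μ i / c i) ⟨i₀, Finset.mem_filter.mpr ⟨hi₀, hci₀⟩⟩
  obtain ⟨hjs, hcj⟩ := Finset.mem_filter.mp hj
  refine ⟨μ j / c j, j, hjs, fun i hi => ?_, by rw [div_mul_cancel₀ _ hcj.ne', sub_self]⟩
  rcases le_or_gt (c i) 0 with hci | hci
  · have : 0 ≤ μ j / c j := div_nonneg (hμ j hjs) hcj.le
    nlinarith [hμ i hi]
  · have := hmin i (Finset.mem_filter.mpr ⟨hi, hci⟩)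
    rw [le_div_iff₀ hci] at this
    linarith

theorem IsBalanced.exists_ssubset_isBalanced {ℬ : Finset (Finset α)} (hb : IsBalanced ℬ)
    {c : Finset α → ℝ} (hc : ∑ S ∈ ℬ, c S • chi S = 0) (hpos : ∃ S ∈ ℬ, 0 < c S) :
    ∃ 𝒞 ⊂ ℬ, IsBalanced 𝒞 := by
  obtain ⟨hnt, μ, hμ, hsum⟩ := isBalanced_iff.mp hb
  obtain ⟨t, S₀, hS₀, hnonneg, hzero⟩ :=
    exists_sub_mul_nonneg_and_eq_zero (fun S hS => (hμ S hS).le) hpos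
  have hsum' : ∑ S ∈ ℬ, (μ S - t * c S) • chi S = fun _ => 1 := by
    simp only [sub_smul, mul_smul, Finset.sum_sub_distrib, ← Finset.smul_sum, hc, smul_zero,
      sub_zero, hsum]
  refine ⟨_, ⟨Finset.filter_subset _ _, fun hsub => ?_⟩, hnt.isBalanced_filter_pos hnonneg hsum'⟩
  exact (Finset.mem_filter.mp (hsub hS₀)).2.ne' hzero

theorem IsBalanced.linearIndepOn_chi {ℬ : Finset (Finset α)} (hb : IsBalanced ℬ)
    (hmin : ∀ 𝒞 ⊂ ℬ, ¬ IsBalanced 𝒞) : LinearIndepOn ℝ chi (ℬ : Set (Finset α)) := by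
  have hno_pos : ∀ c : Finset α → ℝ, ∑ S ∈ ℬ, c S • chi S = 0 → ¬ ∃ S ∈ ℬ, 0 < c S :=
    fun c hc hpos =>
      let ⟨𝒞, h𝒞, hb𝒞⟩ := hb.exists_ssubset_isBalanced hc hpos
      hmin 𝒞 h𝒞 hb𝒞
  refine linearIndepOn_finset_iff.mpr fun c hc S hS => ?_
  rcases lt_trichotomy (c S) 0 with hneg | hzero | hpos
  · refine absurd ⟨S, hS, neg_pos.mpr hneg⟩ (hno_pos (-c) ?_)
    simp only [Pi.neg_apply, neg_smul, Finset.sum_neg_distrib, hc, neg_zero]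
  · exact hzero
  · exact absurd ⟨S, hS, hpos⟩ (hno_pos c hc)

theorem IsBalanced.not_isSemiBalanced_of_ssubset {ℬ 𝒞 : Finset (Finset α)} (hb : IsBalanced ℬ)
    (hli : LinearIndepOn ℝ chi (ℬ : Set (Finset α))) (h𝒞 : 𝒞 ⊂ ℬ) : ¬ IsSemiBalanced 𝒞 := by
  rintro ⟨⟨⟨S, hS⟩, -, -⟩, lam, r, hyield, -, hlam⟩
  obtain ⟨-, μ, hμ, hsum⟩ := isBalanced_iff.mp hb
  set c : Finset α → ℝ := fun T => r * μ T - if T ∈ 𝒞 then lam T else 0 with hc_def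
  have hc : ∑ T ∈ ℬ, c T • chi T = 0 := by
    simp only [hc_def, sub_smul, mul_smul, ite_smul, zero_smul, Finset.sum_sub_distrib,
      ← Finset.smul_sum, hsum, Finset.sum_ite_mem, Finset.inter_eq_right.mpr h𝒞.subset,
      combYields_iff.mp hyield]
    funext i
    simp
  have hc_zero := linearIndepOn_finset_iff.mp hli c hc
  obtain ⟨T, hTℬ, hT𝒞⟩ := Finset.exists_of_ssubset h𝒞
  have hr : r = 0 := by
    have := hc_zero T hTℬ
    simp only [hc_def, hT𝒞, if_false, sub_zero] at this
    exact (mul_eq_zero.mp this).resolve_right (hμ T hTℬ).ne'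
  have := hc_zero S (h𝒞.subset hS)
  simp only [hc_def, hS, if_true, hr, zero_mul, zero_sub, neg_eq_zero] at this
  exact hlam S hS this

theorem stmt6_general (ℬ : Finset (Finset α))
    (hb : IsBalanced ℬ) :
    (∀ 𝒞 ⊂ ℬ, ¬ IsBalanced 𝒞) ↔ (∀ 𝒞 ⊂ ℬ, ¬ IsSemiBalanced 𝒞) :=
  ⟨fun hmin _ h𝒞 => hb.not_isSemiBalanced_of_ssubset (hb.linearIndepOn_chi hmin) h𝒞,
    fun hmin 𝒞 h𝒞 hb𝒞 => hmin 𝒞 h𝒞 hb𝒞.isSemiBalanced⟩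

theorem stmt6 (h2 : 2 ≤ Fintype.card α) (ℬ : Finset (Finset α))
    (hb : IsBalanced ℬ) :
    (∀ 𝒞 ⊂ ℬ, ¬ IsBalanced 𝒞) ↔ (∀ 𝒞 ⊂ ℬ, ¬ IsSemiBalanced 𝒞) :=
  stmt6_general ℬ hb
end

section
/- Let N be a finite set with |N| ≥ 2 and let S be a min-semi-balanced set system on N. Then |S| ≤ |N|. -/
open Finset

variable {α : Type*} [Fintype α] [DecidableEq α]

theorem stmt7 (h2 : 2 ≤ Fintype.card α) (𝒮 : Finset (Finset α))
    (hmin : IsMinSemiBalanced 𝒮) :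
    𝒮.card ≤ Fintype.card α := by
  have hne : Nonempty α := by
    rw [← Fintype.card_pos_iff]; omega
  by_contra hlt
  push_neg at hlt
  obtain ⟨⟨hnt, lam, r, hyield, hsc, hnz⟩, hminim⟩ := hmin
  -- choose the (possibly) exceptional set T
  have hT : ∃ T ∈ 𝒮, ∀ S ∈ 𝒮, S ≠ T → 0 < lam S := by
    by_cases hneg : (𝒮.filter fun S => lam S < 0).Nonempty
    · obtain ⟨T, hTmem⟩ := hneg
      rw [mem_filter] at hTmem
      refine ⟨T, hTmem.1, fun S hS hST => ?_⟩
      rcases lt_trichotomy (lam S) 0 with h | h | h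
      · exfalso
        have hsub : ({S, T} : Finset (Finset α)) ⊆ 𝒮.filter fun S => lam S < 0 := by
          intro X hX
          rw [mem_insert, mem_singleton] at hX
          rcases hX with rfl | rfl
          · exact mem_filter.mpr ⟨hS, h⟩
          · exact mem_filter.mpr ⟨hTmem.1, hTmem.2⟩
        have hcard := card_le_card hsub
        rw [card_insert_of_notMem (by simpa using hST), card_singleton] at hcard
        have := hsc
        unfold SemiConic at this
        omega
      · exact absurd h (hnz S hS)
      · exact h
    · obtain ⟨T, hTmem⟩ := hnt.1
      refine ⟨T, hTmem, fun S hS _ => ?_⟩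
      rcases lt_trichotomy (lam S) 0 with h | h | h
      · exact absurd ⟨S, mem_filter.mpr ⟨hS, h⟩⟩ hneg
      · exact absurd h (hnz S hS)
      · exact h
  obtain ⟨T, hTS, hpos⟩ := hT
  set 𝒯 : Finset (Finset α) := 𝒮.erase T with h𝒯def
  have hT𝒯 : T ∉ 𝒯 := notMem_erase T 𝒮
  have h𝒯𝒮 : 𝒯 ⊆ 𝒮 := erase_subset T 𝒮
  have hcard𝒯 : Fintype.card α ≤ 𝒯.card := by
    rw [h𝒯def, Finset.card_erase_of_mem hTS]
    omega
  -- a linear dependence among {χ_S : S ∈ 𝒯} ∪ {1}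
  obtain ⟨μ, c, hid, hμ0, hμnz⟩ :
      ∃ (μ : Finset α → ℝ) (c : ℝ), (∀ i : α, ∑ S ∈ 𝒯, μ S * chi S i = c) ∧
        (∀ S, S ∉ 𝒯 → μ S = 0) ∧ ¬ (∀ S ∈ 𝒯, μ S = 0) := by
    have hdep : ¬ LinearIndependent ℝ
        (fun o : Option ↥𝒯 => Option.elim o (fun _ => (1:ℝ)) (fun S => chi (S : Finset α))) := by
      intro hli
      have hle := hli.fintype_card_le_finrank
      rw [Module.finrank_pi, Fintype.card_option, Fintype.card_coe] at hle
      omega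
    rw [Fintype.not_linearIndependent_iff] at hdep
    obtain ⟨g, hsum, o₀, ho₀⟩ := hdep
    set μ : Finset α → ℝ := fun S => if h : S ∈ 𝒯 then g (some ⟨S, h⟩) else 0 with hμdef
    have hμeq : ∀ b : ↥𝒯, μ (b : Finset α) = g (some b) := by
      intro b
      simp only [hμdef, dif_pos b.2]
    have hpt : ∀ i : α, g none + ∑ b ∈ 𝒯.attach, g (some b) * chi (b : Finset α) i = 0 := by
      intro i
      have h1 := congrFun hsum i
      rw [Finset.sum_apply] at h1
      rw [Fintype.sum_option] at h1
      simpa using h1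
    refine ⟨μ, -g none, ?_, ?_, ?_⟩
    · intro i
      have hA : ∑ S ∈ 𝒯, μ S * chi S i = ∑ b ∈ 𝒯.attach, g (some b) * chi (b : Finset α) i := by
        rw [← Finset.sum_attach 𝒯 (fun S => μ S * chi S i)]
        exact Finset.sum_congr rfl (fun b _ => by rw [hμeq b])
      rw [hA]
      linarith [hpt i]
    · intro S hS
      simp only [hμdef, dif_neg hS]
    · intro hall
      have hz : ∀ b : ↥𝒯, g (some b) = 0 := by
        intro b
        rw [← hμeq b]
        exact hall b b.2
      have hgn : g none = 0 := by
        have h1 := hpt (Classical.arbitrary α)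
        rw [Finset.sum_eq_zero (fun b _ => by rw [hz b, zero_mul])] at h1
        linarith
      cases o₀ with
      | none => exact ho₀ hgn
      | some b => exact ho₀ (hz b)
  -- normalize the sign: get ν with a strictly negative coefficient somewhere on 𝒯
  obtain ⟨ν, c', hid', hν0, S₁, hS₁𝒯, hν₁⟩ :
      ∃ (ν : Finset α → ℝ) (c' : ℝ), (∀ i : α, ∑ S ∈ 𝒯, ν S * chi S i = c') ∧
        (∀ S, S ∉ 𝒯 → ν S = 0) ∧ ∃ S₁ ∈ 𝒯, ν S₁ < 0 := by
    push_neg at hμnz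
    obtain ⟨S₁, hS₁, hμS₁⟩ := hμnz
    rcases lt_or_gt_of_ne hμS₁ with h | h
    · exact ⟨μ, c, hid, hμ0, S₁, hS₁, h⟩
    · refine ⟨fun S => -μ S, -c, fun i => ?_,
        fun S hS => show -μ S = 0 by rw [hμ0 S hS, neg_zero],
        S₁, hS₁, show -μ S₁ < 0 by linarith⟩
      rw [← hid i, ← Finset.sum_neg_distrib]
      exact Finset.sum_congr rfl (fun S _ => by ring)
  -- minimum ratio
  set F : Finset (Finset α) := 𝒯.filter fun S => ν S < 0 with hFdef
  have hFne : F.Nonempty := ⟨S₁, mem_filter.mpr ⟨hS₁𝒯, hν₁⟩⟩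
  obtain ⟨S₀, hS₀F, hS₀min⟩ := Finset.exists_min_image F (fun S => lam S / (-ν S)) hFne
  rw [mem_filter] at hS₀F
  have hS₀𝒮 : S₀ ∈ 𝒮 := h𝒯𝒮 hS₀F.1
  have hS₀T : S₀ ≠ T := (mem_erase.mp hS₀F.1).1
  set t : ℝ := lam S₀ / (-ν S₀) with htdef
  have ht : 0 < t := div_pos (hpos S₀ hS₀𝒮 hS₀T) (by linarith [hS₀F.2])
  set lam' : Finset α → ℝ := fun S => lam S + t * ν S with hlam'def
  have hlam'T : lam' T = lam T := by simp [hlam'def, hν0 T hT𝒯]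
  have hlam'S₀ : lam' S₀ = 0 := by
    have hν₀ : ν S₀ ≠ 0 := ne_of_lt hS₀F.2
    have h1 : t * ν S₀ = -lam S₀ := by
      rw [htdef, div_mul_eq_mul_div, div_neg, mul_div_assoc, div_self hν₀, mul_one]
    show lam S₀ + t * ν S₀ = 0
    linarith
  have hge : ∀ S ∈ 𝒮, S ≠ T → 0 ≤ lam' S := by
    intro S hS hST
    rcases lt_or_ge (ν S) 0 with h | h
    · have hS𝒯 : S ∈ 𝒯 := mem_erase.mpr ⟨hST, hS⟩
      have hSF : S ∈ F := mem_filter.mpr ⟨hS𝒯, h⟩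
      have hmin' := hS₀min S hSF
      rw [le_div_iff₀ (by linarith)] at hmin'
      have : t * ν S ≥ -lam S := by nlinarith
      simp only [hlam'def]
      linarith
    · have := hpos S hS hST
      have := mul_nonneg ht.le h
      simp only [hlam'def]
      linarith
  set 𝒞 : Finset (Finset α) := 𝒮.filter fun S => lam' S ≠ 0 with h𝒞def
  have h𝒞𝒮 : 𝒞 ⊆ 𝒮 := filter_subset _ _
  have hT𝒞 : T ∈ 𝒞 := mem_filter.mpr ⟨hTS, by rw [hlam'T]; exact hnz T hTS⟩
  have hss : 𝒞 ⊂ 𝒮 := by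
    rw [Finset.ssubset_iff_of_subset h𝒞𝒮]
    exact ⟨S₀, hS₀𝒮, fun hmem => (mem_filter.mp hmem).2 hlam'S₀⟩
  refine hminim 𝒞 hss ⟨⟨⟨T, hT𝒞⟩, fun h => hnt.2.1 (h𝒞𝒮 h), fun h => hnt.2.2 (h𝒞𝒮 h)⟩,
    lam', r + t * c', fun i => ?_, ?_, fun S hS => (mem_filter.mp hS).2⟩
  · -- CombYields
    have hsum𝒮 : ∑ S ∈ 𝒞, lam' S * chi S i = ∑ S ∈ 𝒮, lam' S * chi S i := by
      refine Finset.sum_subset h𝒞𝒮 (fun S hS hS' => ?_)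
      have : lam' S = 0 := by
        by_contra h
        exact hS' (mem_filter.mpr ⟨hS, h⟩)
      rw [this, zero_mul]
    have hν𝒮 : ∑ S ∈ 𝒮, ν S * chi S i = c' := by
      rw [← hid' i]
      refine (Finset.sum_subset h𝒯𝒮 (fun S hS hS' => ?_)).symm
      rw [hν0 S hS', zero_mul]
    rw [hsum𝒮]
    have : ∑ S ∈ 𝒮, lam' S * chi S i
        = ∑ S ∈ 𝒮, lam S * chi S i + t * ∑ S ∈ 𝒮, ν S * chi S i := by
      rw [Finset.mul_sum, ← Finset.sum_add_distrib]
      exact Finset.sum_congr rfl (fun S _ => by simp only [hlam'def]; ring)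
    rw [this, hyield i, hν𝒮]
  · -- SemiConic
    have hsub : (𝒞.filter fun S => lam' S < 0) ⊆ {T} := by
      intro S hS
      rw [mem_filter] at hS
      rw [mem_singleton]
      by_contra hST
      exact absurd hS.2 (not_lt.mpr (hge S (h𝒞𝒮 hS.1) hST))
    calc (𝒞.filter fun S => lam' S < 0).card ≤ ({T} : Finset (Finset α)).card :=
          card_le_card hsub
      _ = 1 := card_singleton T
end

section
/- Let N be a finite set with |N| ≥ 2 and let S be a nontrivial set system on N. Then S is semi-balanced on N if and only if the complementary system S* := {N\S : S ∈ S} is semi-balanced on N. -/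
open Finset

variable {α : Type*} [Fintype α] [DecidableEq α]

/-!
Complementation is an involution on set systems, so it suffices to show that `𝒮*` is
semi-balanced whenever `𝒮` is. If `∑ λ_S χ_S = r·𝟙`, then, since `χ_{N∖S} = 𝟙 - χ_S`, giving
`N∖S` the same coefficient `λ_S` yields `∑ λ_S χ_{N∖S} = (∑ λ_S - r)·𝟙`; the coefficients, and
hence their signs, are unchanged.
-/

lemma chi_compl (S : Finset α) (i : α) : chi Sᶜ i = 1 - chi S i := by
  by_cases hi : i ∈ S <;> simp [chi, hi]

lemma IsNontrivial.image_compl {𝒮 : Finset (Finset α)} (h : IsNontrivial 𝒮) :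
    IsNontrivial (𝒮.image compl) := by
  obtain ⟨hne, hempty, huniv⟩ := h
  refine ⟨hne.image _, ?_, ?_⟩ <;> simpa

lemma CombYields.image_compl {𝒮 : Finset (Finset α)} {lam : Finset α → ℝ} {r : ℝ}
    (h : CombYields 𝒮 lam r) :
    CombYields (𝒮.image compl) (lam ∘ compl) ((∑ S ∈ 𝒮, lam S) - r) := by
  intro i
  rw [Finset.sum_image fun _ _ _ _ hST => compl_injective hST, ← h i,
    ← Finset.sum_sub_distrib]
  refine Finset.sum_congr rfl fun S _ => ?_
  rw [Function.comp_apply, compl_compl, chi_compl]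
  ring

lemma SemiConic.image_compl {𝒮 : Finset (Finset α)} {lam : Finset α → ℝ}
    (h : SemiConic 𝒮 lam) : SemiConic (𝒮.image compl) (lam ∘ compl) := by
  unfold SemiConic at h ⊢
  rw [Finset.filter_image, Finset.card_image_of_injective _ compl_injective]
  simpa [Function.comp_def] using h

lemma IsSemiBalanced.image_compl {𝒮 : Finset (Finset α)} (h : IsSemiBalanced 𝒮) :
    IsSemiBalanced (𝒮.image compl) := by
  obtain ⟨hnt, lam, r, hcomb, hsc, hnz⟩ := h
  refine ⟨hnt.image_compl, lam ∘ compl, _, hcomb.image_compl, hsc.image_compl, ?_⟩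
  intro T hT
  exact hnz _ (by simpa using hT)

theorem stmt8_general (𝒮 : Finset (Finset α)) :
    IsSemiBalanced 𝒮 ↔ IsSemiBalanced (𝒮.image fun S => Sᶜ) := by
  refine ⟨IsSemiBalanced.image_compl, fun h => ?_⟩
  simpa [Finset.image_image, Function.comp_def] using h.image_compl

theorem stmt8 (h2 : 2 ≤ Fintype.card α) (𝒮 : Finset (Finset α))
    (hnt : IsNontrivial 𝒮) :
    IsSemiBalanced 𝒮 ↔ IsSemiBalanced (𝒮.image fun S => Sᶜ) :=
  stmt8_general 𝒮
end

section
/- Let N be a finite set with |N| ≥ 2 and let S be a min-semi-balanced system on N whose unique affine (semi-conic, all coefficients nonzero) combination ∑_{S∈S} λ_S·χ_S equals r·χ_N with r ∈ [0,1]. Then r = 0 if and only if ⋃S is a proper subset of N. -/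
open Finset

variable {α : Type*} [Fintype α] [DecidableEq α]

theorem stmt10 (h2 : 2 ≤ Fintype.card α) (𝒮 : Finset (Finset α))
    (hmin : IsMinSemiBalanced 𝒮) (lam : Finset α → ℝ) (r : ℝ)
    (haff : ∑ S ∈ 𝒮, lam S = 1) (hcomb : CombYields 𝒮 lam r)
    (hsc : SemiConic 𝒮 lam) (hnz : ∀ S ∈ 𝒮, lam S ≠ 0)
    (hr0 : 0 ≤ r) (hr1 : r ≤ 1) :
    r = 0 ↔ 𝒮.sup id ⊂ (Finset.univ : Finset α) := by
  obtain ⟨⟨⟨hne, hempty, huniv⟩, _⟩, _⟩ := hmin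
  constructor
  · intro hr
    -- there must be a (unique) negative coefficient
    by_cases hT : ∃ T ∈ 𝒮, lam T < 0
    · obtain ⟨T, hTmem, hTneg⟩ := hT
      -- all other coefficients are positive
      have hpos : ∀ S ∈ 𝒮, S ≠ T → 0 < lam S := by
        intro S hS hST
        rcases lt_trichotomy (lam S) 0 with h | h | h
        · exfalso
          have hsub : ({T, S} : Finset (Finset α)) ⊆ 𝒮.filter fun S => lam S < 0 := by
            intro X hX
            simp only [Finset.mem_insert, Finset.mem_singleton] at hX
            rcases hX with rfl | rfl <;> simp [Finset.mem_filter, hTmem, hTneg, hS, h]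
          have hcard : ({T, S} : Finset (Finset α)).card = 2 := by
            rw [Finset.card_insert_of_notMem (by simp [Ne.symm hST]), Finset.card_singleton]
          have := Finset.card_le_card hsub
          rw [hcard] at this
          exact absurd (this.trans hsc) (by norm_num)
        · exact absurd h (hnz S hS)
        · exact h
      -- every S ∈ 𝒮 is contained in T
      have hsubT : ∀ S ∈ 𝒮, S ⊆ T := by
        intro S hS
        by_cases hST : S = T
        · exact hST ▸ Finset.Subset.refl T
        intro i hi
        by_contra hiT
        have hzero : ∑ X ∈ 𝒮, lam X * chi X i = 0 := by rw [hcomb i, hr]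
        have hterm : ∀ X ∈ 𝒮, 0 ≤ lam X * chi X i := by
          intro X hX
          by_cases hXT : X = T
          · subst hXT; simp [chi, hiT]
          · exact mul_nonneg (hpos X hX hXT).le (by simp [chi]; split <;> norm_num)
        have := (Finset.sum_eq_zero_iff_of_nonneg hterm).mp hzero S hS
        rw [chi] at this
        simp [hi] at this
        exact absurd this (hnz S hS)
      have hsup : 𝒮.sup id ⊆ T := Finset.sup_le fun S hS => hsubT S hS
      have hTuniv : T ⊂ Finset.univ := by
        rw [Finset.ssubset_univ_iff]
        intro h; exact huniv (h ▸ hTmem)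
      exact lt_of_le_of_lt hsup hTuniv
    · -- no negative coefficient: contradiction
      push_neg at hT
      obtain ⟨S₀, hS₀⟩ := hne
      have hS₀ne : S₀ ≠ ∅ := fun h => hempty (h ▸ hS₀)
      obtain ⟨i, hi⟩ := Finset.nonempty_iff_ne_empty.mpr hS₀ne
      have hzero : ∑ X ∈ 𝒮, lam X * chi X i = 0 := by rw [hcomb i, hr]
      have hterm : ∀ X ∈ 𝒮, 0 ≤ lam X * chi X i := by
        intro X hX
        exact mul_nonneg (hT X hX) (by simp [chi]; split <;> norm_num)
      have := (Finset.sum_eq_zero_iff_of_nonneg hterm).mp hzero S₀ hS₀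
      rw [chi] at this
      simp [hi] at this
      exact absurd this (hnz S₀ hS₀)
  · intro hsup
    obtain ⟨i, -, hi⟩ := Finset.exists_of_ssubset hsup
    have : ∀ S ∈ 𝒮, i ∉ S := fun S hS his =>
      hi (Finset.mem_sup.mpr ⟨S, hS, his⟩)
    rw [← hcomb i]
    exact Finset.sum_eq_zero fun S hS => by simp [chi, this S hS]
end

section
/- Let N be a finite set with |N| ≥ 2 and let S be a min-balanced set system on N. Then the unique affine combination of {χ_S : S ∈ S} yielding a constant vector r·χ_N satisfies 0 < r < 1. -/
open Finset

variable {α : Type*} [Fintype α] [DecidableEq α]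

/-!
Fix positive weights `μ` with `∑ μ_S χ_S = χ_N`. Minimality makes the `χ_S` linearly independent:
a nonzero relation `∑ c_S χ_S = 0` could be subtracted from `μ` until some weight vanishes, leaving
a balanced proper subsystem. Hence any combination yielding `r χ_N` is `r μ`, and affinity gives
`r ∑ μ_S = 1`. Finally `∑ μ_S > 1`: a point outside some `T ∈ 𝒮` is already covered with total
weight `1` by the other sets, so `μ_T` is surplus.
-/

namespace IsNontrivial

variable {𝒮 : Finset (Finset α)}

lemma isBalanced_filter_pos_s12 (h : IsNontrivial 𝒮) {ν : Finset α → ℝ}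
    (hν : ∀ S ∈ 𝒮, 0 ≤ ν S) (hν₁ : CombYields 𝒮 ν 1) :
    IsBalanced (𝒮.filter fun S => 0 < ν S) := by
  have hsum : ∀ i, ∑ S ∈ 𝒮 with 0 < ν S, ν S * chi S i = 1 := by
    intro i
    rw [sum_filter_of_ne, hν₁ i]
    intro S hS hne
    exact (hν S hS).lt_of_ne fun h₀ => hne (by rw [← h₀, zero_mul])
  obtain ⟨T, hT⟩ := h.1
  obtain ⟨i, -⟩ := nonempty_iff_ne_empty.mpr fun hT₀ => h.2.1 (hT₀ ▸ hT)
  refine ⟨⟨nonempty_of_sum_ne_zero (by rw [hsum i]; exact one_ne_zero),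
    fun h₀ => h.2.1 (mem_of_mem_filter _ h₀), fun hu => h.2.2 (mem_of_mem_filter _ hu)⟩,
    ν, fun S hS => (mem_filter.mp hS).2, hsum⟩

lemma exists_ssubset_isBalanced_of_combYields_zero (h : IsNontrivial 𝒮)
    {μ c : Finset α → ℝ} (hμ : ∀ S ∈ 𝒮, 0 < μ S) (hμ₁ : CombYields 𝒮 μ 1)
    (hc : CombYields 𝒮 c 0) {T : Finset α} (hT : T ∈ 𝒮) (hcT : 0 < c T) :
    ∃ 𝒞 ⊂ 𝒮, IsBalanced 𝒞 := by
  obtain ⟨S₀, hS₀, hS₀min⟩ := (𝒮.filter fun S => 0 < c S).exists_min_image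
    (fun S => μ S / c S) ⟨T, mem_filter.mpr ⟨hT, hcT⟩⟩
  rw [mem_filter] at hS₀
  -- the largest step keeping `μ - ε • c` nonnegative on `𝒮`
  set ε := μ S₀ / c S₀
  set ν : Finset α → ℝ := fun S => μ S - ε * c S
  have hν : ∀ S ∈ 𝒮, 0 ≤ ν S := by
    intro S hS
    rcases lt_or_ge 0 (c S) with hcS | hcS
    · have hεS : ε ≤ μ S / c S := hS₀min S (mem_filter.mpr ⟨hS, hcS⟩)
      rw [le_div_iff₀ hcS] at hεS
      exact sub_nonneg.mpr hεS
    · have hε : 0 < ε := div_pos (hμ _ hS₀.1) hS₀.2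
      linarith [mul_nonpos_of_nonneg_of_nonpos hε.le hcS, hμ S hS]
  have hν₁ : CombYields 𝒮 ν 1 := by
    intro i
    simp only [ν, sub_mul, sum_sub_distrib, mul_assoc, ← mul_sum, hμ₁ i, hc i, mul_zero, sub_zero]
  have hνS₀ : ν S₀ = 0 := sub_eq_zero.mpr (div_mul_cancel₀ _ hS₀.2.ne').symm
  refine ⟨_, ⟨filter_subset _ _, fun hsub => ?_⟩, h.isBalanced_filter_pos_s12 hν hν₁⟩
  exact (mem_filter.mp (hsub hS₀.1)).2.ne' hνS₀

lemma one_lt_sum_of_combYields_one (h : IsNontrivial 𝒮) {μ : Finset α → ℝ}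
    (hμ : ∀ S ∈ 𝒮, 0 < μ S) (hμ₁ : CombYields 𝒮 μ 1) : 1 < ∑ S ∈ 𝒮, μ S := by
  obtain ⟨T, hT⟩ := h.1
  obtain ⟨i, hi⟩ : ∃ i, i ∉ T := by
    by_contra! hT_univ
    exact h.2.2 (eq_univ_iff_forall.mpr hT_univ ▸ hT)
  calc 1 < ∑ S ∈ 𝒮 with i ∈ S, μ S + μ T := by
        have hcover := hμ₁ i
        simp only [chi, mul_ite, mul_one, mul_zero, ← sum_filter] at hcover
        linarith [hμ T hT]
    _ ≤ ∑ S ∈ 𝒮 with i ∈ S, μ S + ∑ S ∈ 𝒮 with i ∉ S, μ S := by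
        gcongr
        exact single_le_sum (fun S hS => (hμ S (mem_filter.mp hS).1).le) (mem_filter.mpr ⟨hT, hi⟩)
    _ = ∑ S ∈ 𝒮, μ S := sum_filter_add_sum_filter_not _ _ _

end IsNontrivial

namespace IsMinBalanced

variable {𝒮 : Finset (Finset α)}

theorem linearIndepOn (h : IsMinBalanced 𝒮) : LinearIndepOn ℝ chi (𝒮 : Set (Finset α)) := by
  obtain ⟨⟨hnt, μ, hμ, hμ₁⟩, hminimal⟩ := h
  have hnonpos : ∀ c : Finset α → ℝ, CombYields 𝒮 c 0 → ∀ T ∈ 𝒮, c T ≤ 0 := by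
    intro c hc T hT
    by_contra! hcT
    obtain ⟨𝒞, hss, hbal⟩ := hnt.exists_ssubset_isBalanced_of_combYields_zero hμ hμ₁ hc hT hcT
    exact hminimal 𝒞 hss hbal
  rw [linearIndepOn_finset_iff]
  intro c hc T hT
  have hc₀ : CombYields 𝒮 c 0 := fun i => by simpa using congrFun hc i
  have hneg : CombYields 𝒮 (-c) 0 := fun i => by simp [sum_neg_distrib, hc₀ i]
  exact le_antisymm (hnonpos c hc₀ T hT) (neg_nonpos.mp (hnonpos (-c) hneg T hT))

lemma eq_mul_of_combYields (h : IsMinBalanced 𝒮) {μ lam : Finset α → ℝ} {r : ℝ}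
    (hμ₁ : CombYields 𝒮 μ 1) (hlam : CombYields 𝒮 lam r) : ∀ S ∈ 𝒮, lam S = r * μ S := by
  intro S hS
  refine sub_eq_zero.mp (linearIndepOn_finset_iff.mp h.linearIndepOn
    (fun S => lam S - r * μ S) (funext fun i => ?_) S hS)
  simp [sub_mul, sum_sub_distrib, mul_assoc, ← mul_sum, hlam i, hμ₁ i]

end IsMinBalanced

theorem stmt12_general (𝒮 : Finset (Finset α))
    (hmin : IsMinBalanced 𝒮) (lam : Finset α → ℝ) (r : ℝ)
    (haff : ∑ S ∈ 𝒮, lam S = 1) (hcomb : CombYields 𝒮 lam r) :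
    0 < r ∧ r < 1 := by
  obtain ⟨hnt, μ, hμ, hμ₁⟩ := hmin.1
  have hμsum : 1 < ∑ S ∈ 𝒮, μ S := hnt.one_lt_sum_of_combYields_one hμ hμ₁
  have hr : r * ∑ S ∈ 𝒮, μ S = 1 := by
    rw [mul_sum, ← sum_congr rfl (hmin.eq_mul_of_combYields hμ₁ hcomb), haff]
  constructor <;> nlinarith

theorem stmt12 (h2 : 2 ≤ Fintype.card α) (𝒮 : Finset (Finset α))
    (hmin : IsMinBalanced 𝒮) (lam : Finset α → ℝ) (r : ℝ)
    (haff : ∑ S ∈ 𝒮, lam S = 1) (hcomb : CombYields 𝒮 lam r) :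
    0 < r ∧ r < 1 :=
  stmt12_general 𝒮 hmin lam r haff hcomb
end

section
/- Let N be a finite set with |N| ≥ 3 and let D = {Y, Z} be a min-balanced system on N with |D| = 2 (so Y and Z partition N with |Y| ≥ 2). Fix a set R with ∅ ≠ R ⊂ Y. Then both S := {Z, R, Z∪R} and T := {Z∪R, Y, R} are min-semi-balanced systems on N which are not balanced, and θ_D = (1/2)·θ_S + (1/2)·θ_T. -/
open Finset

variable {α : Type*} [Fintype α] [DecidableEq α]

/-- The coefficient vector `θ_𝒮` assigned to a set system `𝒮` together with the
affine semi-conic combination `lam` yielding the constant vector `[r,…,r]`. -/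
def thetaVec (𝒮 : Finset (Finset α)) (lam : Finset α → ℝ) (r : ℝ) : Finset α → ℝ :=
  fun L => if L = (Finset.univ : Finset α) then r else if L = ∅ then 1 - r
    else if L ∈ 𝒮 then - lam L else 0


lemma sum3 {α : Type*} [DecidableEq α] {β : Type*} [AddCommMonoid β] {A B C : Finset α}
    (hAB : A ≠ B) (hAC : A ≠ C) (hBC : B ≠ C) (f : Finset α → β) :
    ∑ S ∈ ({A, B, C} : Finset (Finset α)), f S = f A + f B + f C := by
  rw [show ({A, B, C} : Finset (Finset α)) = insert A {B, C} from rfl,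
    Finset.sum_insert (by simp [hAB, hAC]), Finset.sum_pair hBC, add_assoc]

lemma sum_sub3 {α : Type*} [DecidableEq α] {β : Type*} [AddCommMonoid β] {A B C : Finset α}
    {𝒞 : Finset (Finset α)} (h : 𝒞 ⊆ ({A, B, C} : Finset (Finset α)))
    (hAB : A ≠ B) (hAC : A ≠ C) (hBC : B ≠ C) (f : Finset α → β) :
    ∑ S ∈ 𝒞, f S = (if A ∈ 𝒞 then f A else 0) + (if B ∈ 𝒞 then f B else 0)
      + (if C ∈ 𝒞 then f C else 0) := by
  have key : ∑ S ∈ 𝒞, f S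
      = ∑ S ∈ ({A, B, C} : Finset (Finset α)), (if S ∈ 𝒞 then f S else 0) := by
    rw [← Finset.sum_subset h (fun x _ hx => if_neg hx)]
    exact Finset.sum_congr rfl (fun x hx => (if_pos hx).symm)
  rw [key, sum3 hAB hAC hBC]

theorem stmt15 (h3 : 3 ≤ Fintype.card α) (Y Z R : Finset α)
    (hYZ : Z = Yᶜ) (hZne : Z ≠ ∅) (hYcard : 2 ≤ Y.card)
    (hRne : R ≠ ∅) (hRY : R ⊂ Y)
    (hD : IsMinBalanced ({Y, Z} : Finset (Finset α)))
    (hDcard : ({Y, Z} : Finset (Finset α)).card = 2) :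
    (IsMinSemiBalanced ({Z, R, Z ∪ R} : Finset (Finset α)) ∧
      ¬ IsBalanced ({Z, R, Z ∪ R} : Finset (Finset α))) ∧
    (IsMinSemiBalanced ({Z ∪ R, Y, R} : Finset (Finset α)) ∧
      ¬ IsBalanced ({Z ∪ R, Y, R} : Finset (Finset α))) ∧
    (∀ (lamD lamS lamT : Finset α → ℝ) (rD rS rT : ℝ),
      (∑ S ∈ ({Y, Z} : Finset (Finset α)), lamD S = 1) →
      CombYields ({Y, Z} : Finset (Finset α)) lamD rD →
      SemiConic ({Y, Z} : Finset (Finset α)) lamD →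
      (∀ S ∈ ({Y, Z} : Finset (Finset α)), lamD S ≠ 0) →
      (∑ S ∈ ({Z, R, Z ∪ R} : Finset (Finset α)), lamS S = 1) →
      CombYields ({Z, R, Z ∪ R} : Finset (Finset α)) lamS rS →
      SemiConic ({Z, R, Z ∪ R} : Finset (Finset α)) lamS →
      (∀ S ∈ ({Z, R, Z ∪ R} : Finset (Finset α)), lamS S ≠ 0) →
      (∑ S ∈ ({Z ∪ R, Y, R} : Finset (Finset α)), lamT S = 1) →
      CombYields ({Z ∪ R, Y, R} : Finset (Finset α)) lamT rT →
      SemiConic ({Z ∪ R, Y, R} : Finset (Finset α)) lamT →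
      (∀ S ∈ ({Z ∪ R, Y, R} : Finset (Finset α)), lamT S ≠ 0) →
      ∀ L : Finset α, thetaVec ({Y, Z} : Finset (Finset α)) lamD rD L =
        (1/2) * thetaVec ({Z, R, Z ∪ R} : Finset (Finset α)) lamS rS L +
        (1/2) * thetaVec ({Z ∪ R, Y, R} : Finset (Finset α)) lamT rT L) := by
  -- pick elements
  obtain ⟨z, hz⟩ := Finset.nonempty_iff_ne_empty.mpr hZne
  obtain ⟨a, ha⟩ := Finset.nonempty_iff_ne_empty.mpr hRne
  obtain ⟨b, hbY, hbR⟩ := Finset.exists_of_ssubset hRY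
  have haY : a ∈ Y := hRY.1 ha
  have hzY : z ∉ Y := by rw [hYZ] at hz; simpa using hz
  have hzR : z ∉ R := fun h => hzY (hRY.1 h)
  have haZ : a ∉ Z := by rw [hYZ]; simpa using haY
  have hbZ : b ∉ Z := by rw [hYZ]; simpa using hbY
  have hzZR : z ∈ Z ∪ R := Finset.mem_union_left _ hz
  have haZR : a ∈ Z ∪ R := Finset.mem_union_right _ ha
  have hbZR : b ∉ Z ∪ R := by simp [hbZ, hbR]
  have hdisj : ∀ i : α, i ∈ Z → i ∉ R := by
    intro i hiZ hiR
    rw [hYZ, Finset.mem_compl] at hiZ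
    exact hiZ (hRY.1 hiR)
  have hcompl : ∀ i : α, i ∉ Y → i ∈ Z := by
    intro i hiY; rw [hYZ, Finset.mem_compl]; exact hiY
  -- distinctness
  have hYneZ : Y ≠ Z := by intro h; rw [h] at haY; exact haZ haY
  have hYneR : Y ≠ R := by intro h; rw [h] at hbY; exact hbR hbY
  have hZneR : Z ≠ R := by intro h; rw [h] at hz; exact (hdisj z (h ▸ hz)) hz
  have hZneZR : Z ≠ Z ∪ R := by intro h; rw [← h] at haZR; exact haZ haZR
  have hRneZR : R ≠ Z ∪ R := by intro h; rw [← h] at hzZR; exact hzR hzZR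
  have hYneZR : Y ≠ Z ∪ R := by intro h; rw [← h] at hzZR; exact hzY hzZR
  have hYne : Y ≠ ∅ := by intro h; rw [h] at haY; exact absurd haY (Finset.notMem_empty a)
  have hZRne : Z ∪ R ≠ ∅ := by
    intro h; rw [h] at hzZR; exact absurd hzZR (Finset.notMem_empty z)
  have hYnu : Y ≠ Finset.univ := by intro h; rw [h] at hzY; exact hzY (Finset.mem_univ z)
  have hZnu : Z ≠ Finset.univ := by intro h; rw [h] at haZ; exact haZ (Finset.mem_univ a)
  have hRnu : R ≠ Finset.univ := by intro h; rw [h] at hbR; exact hbR (Finset.mem_univ b)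
  have hZRnu : Z ∪ R ≠ Finset.univ := by
    intro h; rw [h] at hbZR; exact hbZR (Finset.mem_univ b)
  -- the system S = {Z, R, Z ∪ R}
  have hSnt : IsNontrivial ({Z, R, Z ∪ R} : Finset (Finset α)) := by
    refine ⟨⟨Z, by simp⟩, ?_, ?_⟩
    · simp only [Finset.mem_insert, Finset.mem_singleton]
      push_neg
      exact ⟨Ne.symm hZne, Ne.symm hRne, Ne.symm hZRne⟩
    · simp only [Finset.mem_insert, Finset.mem_singleton]
      push_neg
      exact ⟨Ne.symm hZnu, Ne.symm hRnu, Ne.symm hZRnu⟩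
  have hSsb : IsSemiBalanced ({Z, R, Z ∪ R} : Finset (Finset α)) := by
    refine ⟨hSnt, fun S => if S = Z ∪ R then -1 else 1, 0, ?_, ?_, ?_⟩
    · intro i
      rw [sum3 hZneR hZneZR hRneZR]
      simp only [if_neg hZneZR, if_neg hRneZR, if_pos rfl]
      by_cases hiZ : i ∈ Z <;> by_cases hiR : i ∈ R
      · exact absurd hiR (hdisj i hiZ)
      all_goals simp [chi, Finset.mem_union, hiZ, hiR]
    · have hsub : (({Z, R, Z ∪ R} : Finset (Finset α)).filter
          fun S => (if S = Z ∪ R then (-1 : ℝ) else 1) < 0) ⊆ {Z ∪ R} := by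
        intro S hS
        simp only [Finset.mem_filter] at hS
        simp only [Finset.mem_singleton]
        by_contra h
        rw [if_neg h] at hS
        linarith [hS.2]
      exact le_trans (Finset.card_le_card hsub) (by simp)
    · intro S _
      by_cases h : S = Z ∪ R <;> simp [h]
  have hSmin : ∀ 𝒞 ⊂ ({Z, R, Z ∪ R} : Finset (Finset α)), ¬ IsSemiBalanced 𝒞 := by
    intro 𝒞 h𝒞 hC
    obtain ⟨⟨hne, -, -⟩, lam, r, hcy, -, hnz⟩ := hC
    have hb' := hcy b
    rw [sum_sub3 h𝒞.subset hZneR hZneZR hRneZR] at hb'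
    simp only [chi, if_neg hbZ, if_neg hbR, if_neg hbZR, mul_zero,
      ite_self, add_zero] at hb'
    have hz' := hcy z
    rw [sum_sub3 h𝒞.subset hZneR hZneZR hRneZR] at hz'
    simp only [chi, if_pos hz, if_neg hzR, if_pos hzZR, mul_one, mul_zero, ite_self,
      add_zero] at hz'
    have ha' := hcy a
    rw [sum_sub3 h𝒞.subset hZneR hZneZR hRneZR] at ha'
    simp only [chi, if_neg haZ, if_pos ha, if_pos haZR, mul_one, mul_zero, ite_self,
      zero_add] at ha'
    rw [← hb'] at hz' ha'
    by_cases hZR : Z ∪ R ∈ 𝒞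
    · rw [if_pos hZR] at hz' ha'
      have hZRnz := hnz _ hZR
      have hZin : Z ∈ 𝒞 := by
        by_contra h
        rw [if_neg h, zero_add] at hz'; exact hZRnz hz'
      have hRin : R ∈ 𝒞 := by
        by_contra h
        rw [if_neg h, zero_add] at ha'; exact hZRnz ha'
      exact absurd (Finset.insert_subset hZin (Finset.insert_subset hRin
        (Finset.singleton_subset_iff.mpr hZR))) h𝒞.not_subset
    · rw [if_neg hZR, add_zero] at hz' ha'
      have hZout : Z ∉ 𝒞 := by
        intro h; rw [if_pos h] at hz'; exact hnz _ h hz'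
      have hRout : R ∉ 𝒞 := by
        intro h; rw [if_pos h] at ha'; exact hnz _ h ha'
      obtain ⟨X, hX⟩ := hne
      have hX' := h𝒞.subset hX
      simp only [Finset.mem_insert, Finset.mem_singleton] at hX'
      rcases hX' with h | h | h
      · exact hZout (h ▸ hX)
      · exact hRout (h ▸ hX)
      · exact hZR (h ▸ hX)
  have hSnb : ¬ IsBalanced ({Z, R, Z ∪ R} : Finset (Finset α)) := by
    rintro ⟨-, lam, -, hsum⟩
    have := hsum b
    rw [sum3 hZneR hZneZR hRneZR] at this
    simp only [chi, if_neg hbZ, if_neg hbR, if_neg hbZR, mul_zero,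
      add_zero] at this
    linarith
  -- the system T = {Z ∪ R, Y, R}
  have hTnt : IsNontrivial ({Z ∪ R, Y, R} : Finset (Finset α)) := by
    refine ⟨⟨Y, by simp⟩, ?_, ?_⟩
    · simp only [Finset.mem_insert, Finset.mem_singleton]
      push_neg
      exact ⟨Ne.symm hZRne, Ne.symm hYne, Ne.symm hRne⟩
    · simp only [Finset.mem_insert, Finset.mem_singleton]
      push_neg
      exact ⟨Ne.symm hZRnu, Ne.symm hYnu, Ne.symm hRnu⟩
  have hZRneY : Z ∪ R ≠ Y := Ne.symm hYneZR
  have hZRneR : Z ∪ R ≠ R := Ne.symm hRneZR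
  have hTsb : IsSemiBalanced ({Z ∪ R, Y, R} : Finset (Finset α)) := by
    refine ⟨hTnt, fun S => if S = R then -1 else 1, 1, ?_, ?_, ?_⟩
    · intro i
      rw [sum3 hZRneY hZRneR hYneR]
      simp only [if_neg hZRneR, if_neg hYneR, if_pos rfl]
      by_cases hiY : i ∈ Y <;> by_cases hiR : i ∈ R
      · have hiZ : i ∉ Z := fun h => hdisj i h hiR
        simp [chi, Finset.mem_union, hiY, hiR, hiZ]
      · have hiZ : i ∉ Z := by rw [hYZ, Finset.mem_compl]; simpa using hiY
        simp [chi, Finset.mem_union, hiY, hiR, hiZ]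
      · exact absurd (hRY.1 hiR) hiY
      · have hiZ : i ∈ Z := hcompl i hiY
        simp [chi, Finset.mem_union, hiY, hiR, hiZ]
    · have hsub : (({Z ∪ R, Y, R} : Finset (Finset α)).filter
          fun S => (if S = R then (-1 : ℝ) else 1) < 0) ⊆ {R} := by
        intro S hS
        simp only [Finset.mem_filter] at hS
        simp only [Finset.mem_singleton]
        by_contra h
        rw [if_neg h] at hS
        linarith [hS.2]
      exact le_trans (Finset.card_le_card hsub) (by simp)
    · intro S _
      by_cases h : S = R <;> simp [h]
  have hTmin : ∀ 𝒞 ⊂ ({Z ∪ R, Y, R} : Finset (Finset α)), ¬ IsSemiBalanced 𝒞 := by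
    intro 𝒞 h𝒞 hC
    obtain ⟨⟨hne, -, -⟩, lam, r, hcy, -, hnz⟩ := hC
    have hz' := hcy z
    rw [sum_sub3 h𝒞.subset hZRneY hZRneR hYneR] at hz'
    simp only [chi, if_pos hzZR, if_neg hzY, if_neg hzR, mul_one,
      mul_zero, ite_self, add_zero] at hz'
    have hb' := hcy b
    rw [sum_sub3 h𝒞.subset hZRneY hZRneR hYneR] at hb'
    simp only [chi, if_neg hbZR, if_pos hbY, if_neg hbR, mul_one,
      mul_zero, ite_self, add_zero, zero_add] at hb'
    have ha' := hcy a
    rw [sum_sub3 h𝒞.subset hZRneY hZRneR hYneR] at ha'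
    simp only [chi, if_pos haZR, if_pos haY, if_pos ha, mul_one] at ha'
    by_cases hr : r = 0
    · rw [hr] at hz' hb' ha'
      have hZRout : Z ∪ R ∉ 𝒞 := by
        intro h; rw [if_pos h] at hz'; exact hnz _ h hz'
      have hYout : Y ∉ 𝒞 := by
        intro h; rw [if_pos h] at hb'; exact hnz _ h hb'
      have hRout : R ∉ 𝒞 := by
        intro h
        rw [if_neg hZRout, if_neg hYout, if_pos h] at ha'
        simp only [zero_add] at ha'
        exact hnz _ h ha'
      obtain ⟨X, hX⟩ := hne
      have hX' := h𝒞.subset hX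
      simp only [Finset.mem_insert, Finset.mem_singleton] at hX'
      rcases hX' with h | h | h
      · exact hZRout (h ▸ hX)
      · exact hYout (h ▸ hX)
      · exact hRout (h ▸ hX)
    · have hZRin : Z ∪ R ∈ 𝒞 := by
        by_contra h; rw [if_neg h] at hz'; exact hr hz'.symm
      have hYin : Y ∈ 𝒞 := by
        by_contra h; rw [if_neg h] at hb'; exact hr hb'.symm
      have hRin : R ∈ 𝒞 := by
        by_contra h
        rw [if_pos hZRin] at hz'
        rw [if_pos hYin] at hb'
        rw [if_pos hZRin, if_pos hYin, if_neg h, add_zero, hz', hb'] at ha'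
        exact hr (by linarith)
      exact absurd (Finset.insert_subset hZRin (Finset.insert_subset hYin
        (Finset.singleton_subset_iff.mpr hRin))) h𝒞.not_subset
  have hTnb : ¬ IsBalanced ({Z ∪ R, Y, R} : Finset (Finset α)) := by
    rintro ⟨-, lam, hpos, hsum⟩
    have h1 := hsum z
    rw [sum3 hZRneY hZRneR hYneR] at h1
    simp only [chi, if_pos hzZR, if_neg hzY, if_neg hzR, mul_one,
      mul_zero, add_zero] at h1
    have h2 := hsum b
    rw [sum3 hZRneY hZRneR hYneR] at h2
    simp only [chi, if_neg hbZR, if_pos hbY, if_neg hbR, mul_one,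
      mul_zero, add_zero, zero_add] at h2
    have h3 := hsum a
    rw [sum3 hZRneY hZRneR hYneR] at h3
    simp only [chi, if_pos haZR, if_pos haY, if_pos ha, mul_one] at h3
    have hR := hpos R (by simp)
    linarith
  refine ⟨⟨⟨hSsb, hSmin⟩, hSnb⟩, ⟨⟨hTsb, hTmin⟩, hTnb⟩, ?_⟩
  intro lamD lamS lamT rD rS rT haffD hcyD _ _ haffS hcyS _ _ haffT hcyT _ _
  -- determine the D coefficients
  rw [Finset.sum_pair hYneZ] at haffD
  have hD1 := hcyD a
  rw [Finset.sum_pair hYneZ] at hD1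
  simp only [chi, if_pos haY, if_neg haZ, mul_one, mul_zero, add_zero] at hD1
  have hD2 := hcyD z
  rw [Finset.sum_pair hYneZ] at hD2
  simp only [chi, if_neg hzY, if_pos hz, mul_one, mul_zero, zero_add] at hD2
  have hrD : rD = 1/2 := by linarith
  -- determine the S coefficients
  rw [sum3 hZneR hZneZR hRneZR] at haffS
  have hS0 := hcyS b
  rw [sum3 hZneR hZneZR hRneZR] at hS0
  simp only [chi, if_neg hbZ, if_neg hbR, if_neg hbZR, mul_zero,
    add_zero] at hS0
  have hS1 := hcyS z
  rw [sum3 hZneR hZneZR hRneZR] at hS1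
  simp only [chi, if_pos hz, if_neg hzR, if_pos hzZR, mul_one, mul_zero, add_zero] at hS1
  have hS2 := hcyS a
  rw [sum3 hZneR hZneZR hRneZR] at hS2
  simp only [chi, if_neg haZ, if_pos ha, if_pos haZR, mul_one, mul_zero, zero_add] at hS2
  have hrS : rS = 0 := by linarith
  have hlamSZ : lamS Z = 1 := by linarith
  have hlamSR : lamS R = 1 := by linarith
  have hlamSZR : lamS (Z ∪ R) = -1 := by linarith
  -- determine the T coefficients
  rw [sum3 hZRneY hZRneR hYneR] at haffT
  have hT1 := hcyT z
  rw [sum3 hZRneY hZRneR hYneR] at hT1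
  simp only [chi, if_pos hzZR, if_neg hzY, if_neg hzR, mul_one,
    mul_zero, add_zero] at hT1
  have hT2 := hcyT b
  rw [sum3 hZRneY hZRneR hYneR] at hT2
  simp only [chi, if_neg hbZR, if_pos hbY, if_neg hbR, mul_one,
    mul_zero, add_zero, zero_add] at hT2
  have hT3 := hcyT a
  rw [sum3 hZRneY hZRneR hYneR] at hT3
  simp only [chi, if_pos haZR, if_pos haY, if_pos ha, mul_one] at hT3
  have hrT : rT = 1 := by linarith
  have hlamTZR : lamT (Z ∪ R) = 1 := by linarith
  have hlamTY : lamT Y = 1 := by linarith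
  have hlamTR : lamT R = -1 := by linarith
  -- conclude
  have hene : (∅ : Finset α) ≠ Finset.univ := by
    intro h
    have := Finset.mem_univ a
    rw [← h] at this
    exact absurd this (Finset.notMem_empty a)
  intro L
  by_cases h1 : L = Finset.univ
  · rw [h1]; norm_num [thetaVec, hrD, hrS, hrT]
  by_cases h2 : L = ∅
  · rw [h2]; norm_num [thetaVec, hene, hrD, hrS, hrT]
  by_cases h3 : L = Y
  · rw [h3]
    norm_num [thetaVec, hYnu, hYne, hYneZ, hYneR, hYneZR, hD1, hrD, hlamTY]
  by_cases h4 : L = Z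
  · rw [h4]
    norm_num [thetaVec, hZnu, hZne, hZneR, hZneZR, Ne.symm hYneZ, hD2, hrD, hlamSZ]
  by_cases h5 : L = R
  · rw [h5]
    norm_num [thetaVec, hRnu, hRne, Ne.symm hYneR, Ne.symm hZneR, hRneZR,
      hlamSR, hlamTR]
  by_cases h6 : L = Z ∪ R
  · rw [h6]
    norm_num [thetaVec, hZRnu, hZRne, hZRneY, hZRneR, Ne.symm hZneZR,
      hlamSZR, hlamTZR]
  · norm_num [thetaVec, h1, h2, h3, h4, h5, h6]
end

section
/- Let N be a finite set with |N| ≥ 2, let ∅ ≠ D ⊂ N, and let Θ^N_D be the set of vectors θ ∈ ℝ^{P(N)} satisfying θ(S) ≤ 0 for all S ⊆ N with S ∉ {∅, D, N}, ∑_{L⊆N} θ(L) = 0, and ∑_{L⊆N, i∈L} θ(L) = 0 for every i ∈ N. Then every θ ∈ Θ^N_D satisfies θ(N) ≥ 0 and θ(∅) ≥ 0. -/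
open Finset

variable {α : Type*} [Fintype α] [DecidableEq α]

theorem stmt16 (h2 : 2 ≤ Fintype.card α) (D : Finset α)
    (hDne : D ≠ ∅) (hDss : D ⊂ (Finset.univ : Finset α))
    (θ : Finset α → ℝ)
    (hnonpos : ∀ S : Finset α, S ≠ ∅ → S ≠ D → S ≠ (Finset.univ : Finset α) → θ S ≤ 0)
    (hsum : ∑ L : Finset α, θ L = 0)
    (hpt : ∀ i : α, ∑ L ∈ (Finset.univ : Finset (Finset α)).filter (fun L => i ∈ L), θ L = 0) :
    0 ≤ θ (Finset.univ : Finset α) ∧ 0 ≤ θ ∅ := by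
  have key : ∀ (A : Finset (Finset α)) (T : Finset α), T ∈ A →
      (∀ S ∈ A, S ≠ T → θ S ≤ 0) → ∑ S ∈ A, θ S = 0 → 0 ≤ θ T := by
    intro A T hT hn hs
    have h1 : ∑ S ∈ A.erase T, θ S + θ T = ∑ S ∈ A, θ S := Finset.sum_erase_add A θ hT
    have h2 : ∑ S ∈ A.erase T, θ S ≤ 0 := by
      apply Finset.sum_nonpos
      intro S hS
      exact hn S (Finset.mem_of_mem_erase hS) (Finset.ne_of_mem_erase hS)
    linarith
  constructor
  · obtain ⟨j, _, hj⟩ := Finset.exists_of_ssubset hDss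
    refine key _ _ ?_ ?_ (hpt j)
    · simp
    · intro S hS hSne
      simp only [Finset.mem_filter] at hS
      refine hnonpos S ?_ ?_ hSne
      · rintro rfl; exact absurd hS.2 (by simp)
      · rintro rfl; exact hj hS.2
  · have hD : D.Nonempty := Finset.nonempty_iff_ne_empty.mpr hDne
    obtain ⟨i, hi⟩ := hD
    have hcompl : ∑ L ∈ Finset.univ.filter (fun L => ¬ i ∈ L), θ L = 0 := by
      have := Finset.sum_filter_add_sum_filter_not (Finset.univ : Finset (Finset α))
        (fun L => i ∈ L) θ
      have h := hpt i
      linarith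
    refine key _ _ ?_ ?_ hcompl
    · simp
    · intro S hS hSne
      simp only [Finset.mem_filter] at hS
      refine hnonpos S hSne ?_ ?_
      · rintro rfl; exact hS.2 hi
      · rintro rfl; exact hS.2 (Finset.mem_univ i)
end

section
/- Let N be a finite set with |N| ≥ 2, let ∅ ≠ D ⊂ N, and let Θ̃^N_D := {θ ∈ ℝ^{P(N)} : θ(S) ≤ 0 for S ∉ {∅,D,N}, ∑_{L⊆N} θ(L) = 0, ∑_{L⊆N, i∈L} θ(L) = 0 for all i ∈ N, and θ(N) + θ(∅) = 1}. Then for every θ ∈ Θ̃^N_D and every S ⊆ N with S ∉ {∅, D, N}, one has −1 ≤ θ(S) ≤ 0; moreover −1 ≤ θ(D) ≤ 2^{|N|} − 4. In particular Θ̃^N_D is a bounded set. -/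
open Finset

variable {α : Type*} [Fintype α] [DecidableEq α]

lemma key1 {β : Type*} [DecidableEq β] (T : Finset β) (f : β → ℝ) (A : β) (hA : A ∈ T)
    (hrest : ∀ L ∈ T, L ≠ A → f L ≤ 0) (hT : ∑ L ∈ T, f L = 0) : 0 ≤ f A := by
  have h1 : f A + ∑ L ∈ T.erase A, f L = 0 := by
    rw [Finset.add_sum_erase T f hA]; exact hT
  have h2 : ∑ L ∈ T.erase A, f L ≤ 0 := by
    apply Finset.sum_nonpos
    intro L hL
    exact hrest L (Finset.mem_of_mem_erase hL) (Finset.ne_of_mem_erase hL)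
  linarith

lemma key2 {β : Type*} [DecidableEq β] (T : Finset β) (f : β → ℝ) (A B : β) (hA : A ∈ T)
    (hB : B ∈ T) (hAB : B ≠ A)
    (hrest : ∀ L ∈ T, L ≠ A → L ≠ B → f L ≤ 0) (hT : ∑ L ∈ T, f L = 0) : -f A ≤ f B := by
  have hB' : B ∈ T.erase A := Finset.mem_erase.2 ⟨hAB, hB⟩
  have h1 : f A + (f B + ∑ L ∈ (T.erase A).erase B, f L) = 0 := by
    rw [Finset.add_sum_erase _ f hB', Finset.add_sum_erase T f hA]; exact hT
  have h2 : ∑ L ∈ (T.erase A).erase B, f L ≤ 0 := by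
    apply Finset.sum_nonpos
    intro L hL
    have h3 := Finset.mem_of_mem_erase hL
    exact hrest L (Finset.mem_of_mem_erase h3) (Finset.ne_of_mem_erase h3)
      (Finset.ne_of_mem_erase hL)
  linarith

theorem stmt17 (h2 : 2 ≤ Fintype.card α) (D : Finset α)
    (hDne : D ≠ ∅) (hDss : D ⊂ (Finset.univ : Finset α))
    (θ : Finset α → ℝ)
    (hnonpos : ∀ S : Finset α, S ≠ ∅ → S ≠ D → S ≠ (Finset.univ : Finset α) → θ S ≤ 0)
    (hsum : ∑ L : Finset α, θ L = 0)
    (hpt : ∀ i : α, ∑ L ∈ (Finset.univ : Finset (Finset α)).filter (fun L => i ∈ L), θ L = 0)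
    (hnorm : θ (Finset.univ : Finset α) + θ ∅ = 1) :
    (∀ S : Finset α, S ≠ ∅ → S ≠ D → S ≠ (Finset.univ : Finset α) →
      -1 ≤ θ S ∧ θ S ≤ 0) ∧
    (-1 ≤ θ D ∧ θ D ≤ 2 ^ (Fintype.card α) - 4) ∧
    (∀ L : Finset α, |θ L| ≤ 2 ^ (Fintype.card α)) := by
  classical
  set n := Fintype.card α with hn
  have hne : Nonempty α := Fintype.card_pos_iff.mp (by omega)
  have hNne : (Finset.univ : Finset α) ≠ ∅ := Finset.univ_nonempty.ne_empty
  have h4 : (4 : ℝ) ≤ 2 ^ n := by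
    calc (4 : ℝ) = 2 ^ 2 := by norm_num
    _ ≤ 2 ^ n := pow_le_pow_right₀ one_le_two h2
  obtain ⟨i0, hi0⟩ := Finset.nonempty_iff_ne_empty.2 hDne
  obtain ⟨j0, _, hj0⟩ := Finset.exists_of_ssubset hDss
  -- complement sums vanish
  have hcompl : ∀ i : α,
      ∑ L ∈ (Finset.univ : Finset (Finset α)).filter (fun L => i ∉ L), θ L = 0 := by
    intro i
    have h := Finset.sum_filter_add_sum_filter_not (Finset.univ : Finset (Finset α))
      (fun L => i ∈ L) θ
    have h1 := hpt i
    rw [h1, hsum] at h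
    linarith
  -- θ ∅ ≥ 0
  have hθ0 : 0 ≤ θ ∅ := by
    apply key1 _ θ ∅ (Finset.mem_filter.2 ⟨Finset.mem_univ _, by simp⟩) _ (hcompl i0)
    intro L hL hL0
    have hiL : i0 ∉ L := (Finset.mem_filter.1 hL).2
    refine hnonpos L hL0 ?_ ?_
    · intro h; exact hiL (h ▸ hi0)
    · intro h; exact hiL (h ▸ Finset.mem_univ i0)
  -- θ univ ≥ 0
  have hθN : 0 ≤ θ (Finset.univ : Finset α) := by
    apply key1 _ θ _ (Finset.mem_filter.2 ⟨Finset.mem_univ _, Finset.mem_univ j0⟩) _ (hpt j0)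
    intro L hL hLN
    have hjL : j0 ∈ L := (Finset.mem_filter.1 hL).2
    refine hnonpos L ?_ ?_ hLN
    · intro h; rw [h] at hjL; exact absurd hjL (Finset.notMem_empty j0)
    · intro h; exact hj0 (h ▸ hjL)
  have hθ0le : θ ∅ ≤ 1 := by linarith
  have hθNle : θ (Finset.univ : Finset α) ≤ 1 := by linarith
  -- lower bound for "other" sets
  have hSlow : ∀ S : Finset α, S ≠ ∅ → S ≠ D → S ≠ (Finset.univ : Finset α) → -1 ≤ θ S := by
    intro S hS0 hSD hSN
    by_cases hsub : S ⊆ D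
    · have hDS : (D \ S).Nonempty := by
        rw [Finset.sdiff_nonempty]
        intro h
        exact hSD (Finset.Subset.antisymm hsub h)
      obtain ⟨j, hj⟩ := hDS
      rw [Finset.mem_sdiff] at hj
      have hk := key2 ((Finset.univ : Finset (Finset α)).filter (fun L => j ∉ L)) θ ∅ S
        (Finset.mem_filter.2 ⟨Finset.mem_univ _, by simp⟩)
        (Finset.mem_filter.2 ⟨Finset.mem_univ _, hj.2⟩) hS0 ?_ (hcompl j)
      · linarith
      · intro L hL hL0 hLS
        have hjL : j ∉ L := (Finset.mem_filter.1 hL).2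
        refine hnonpos L hL0 ?_ ?_
        · intro h; exact hjL (h ▸ hj.1)
        · intro h; exact hjL (h ▸ Finset.mem_univ j)
    · rw [Finset.not_subset] at hsub
      obtain ⟨i, hiS, hiD⟩ := hsub
      have hk := key2 ((Finset.univ : Finset (Finset α)).filter (fun L => i ∈ L)) θ
        (Finset.univ : Finset α) S
        (Finset.mem_filter.2 ⟨Finset.mem_univ _, Finset.mem_univ i⟩)
        (Finset.mem_filter.2 ⟨Finset.mem_univ _, hiS⟩) hSN ?_ (hpt i)
      · linarith
      · intro L hL hLN hLS
        have hiL : i ∈ L := (Finset.mem_filter.1 hL).2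
        refine hnonpos L ?_ ?_ hLN
        · intro h; rw [h] at hiL; exact absurd hiL (Finset.notMem_empty i)
        · intro h; exact hiD (h ▸ hiL)
  -- split the total sum
  have hNmem : (Finset.univ : Finset α) ∈ (Finset.univ : Finset (Finset α)).erase ∅ :=
    Finset.mem_erase.2 ⟨hNne, Finset.mem_univ _⟩
  have hDmem : D ∈ ((Finset.univ : Finset (Finset α)).erase ∅).erase (Finset.univ : Finset α) :=
    Finset.mem_erase.2 ⟨hDss.ne, Finset.mem_erase.2 ⟨hDne, Finset.mem_univ _⟩⟩
  set R := (((Finset.univ : Finset (Finset α)).erase ∅).erase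
      (Finset.univ : Finset α)).erase D with hR
  have hsplit : θ ∅ + (θ (Finset.univ : Finset α) + (θ D + ∑ L ∈ R, θ L)) = 0 := by
    rw [Finset.add_sum_erase _ θ hDmem, Finset.add_sum_erase _ θ hNmem,
      Finset.add_sum_erase _ θ (Finset.mem_univ (∅ : Finset α))]
    exact hsum
  have hRprop : ∀ L ∈ R, L ≠ ∅ ∧ L ≠ D ∧ L ≠ (Finset.univ : Finset α) := by
    intro L hL
    have h1 := Finset.mem_of_mem_erase hL
    have h2 := Finset.mem_of_mem_erase h1
    exact ⟨Finset.ne_of_mem_erase h2, Finset.ne_of_mem_erase hL, Finset.ne_of_mem_erase h1⟩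
  have hRle : ∑ L ∈ R, θ L ≤ 0 := by
    apply Finset.sum_nonpos
    intro L hL
    obtain ⟨a, b, c⟩ := hRprop L hL
    exact hnonpos L a b c
  have hn3 : 3 ≤ 2 ^ n := by
    calc 3 ≤ 2 ^ 2 := by norm_num
    _ ≤ 2 ^ n := Nat.pow_le_pow_right (by norm_num) h2
  have hcardR : (R.card : ℝ) = 2 ^ n - 3 := by
    have hc : R.card = 2 ^ n - 3 := by
      have h1 : (Finset.univ : Finset (Finset α)).card = 2 ^ n := by
        rw [Finset.card_univ, Fintype.card_finset]
      rw [hR, Finset.card_erase_of_mem hDmem, Finset.card_erase_of_mem hNmem,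
        Finset.card_erase_of_mem (Finset.mem_univ _), h1]
      omega
    rw [hc, Nat.cast_sub hn3]
    push_cast
    ring
  have hRge : -((2 : ℝ) ^ n - 3) ≤ ∑ L ∈ R, θ L := by
    have h1 : ∑ L ∈ R, (-1 : ℝ) ≤ ∑ L ∈ R, θ L := by
      apply Finset.sum_le_sum
      intro L hL
      obtain ⟨a, b, c⟩ := hRprop L hL
      exact hSlow L a b c
    rw [Finset.sum_const, nsmul_eq_mul] at h1
    rw [hcardR] at h1
    linarith
  have hDlow : -1 ≤ θ D := by linarith
  have hDhigh : θ D ≤ 2 ^ n - 4 := by linarith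
  refine ⟨fun S hS0 hSD hSN => ⟨hSlow S hS0 hSD hSN, hnonpos S hS0 hSD hSN⟩,
    ⟨hDlow, hDhigh⟩, ?_⟩
  intro L
  rw [abs_le]
  by_cases hL0 : L = ∅
  · subst hL0; constructor <;> linarith
  by_cases hLN : L = (Finset.univ : Finset α)
  · subst hLN; constructor <;> linarith
  by_cases hLD : L = D
  · subst hLD; constructor <;> linarith
  · have := hSlow L hL0 hLD hLN
    have := hnonpos L hL0 hLD hLN
    constructor <;> linarith
end
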